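/- arXiv:2007.14265 — 9 statements merged into one kernel-verified Lean document; each statement's English description precedes it below -/
import Mathlib

section
/- Let $(\mathcal{X}, d)$ be a metric space satisfying the barycenter property, $\boldsymbol{a} = (a_1, \ldots, a_K) \in \mathcal{X}^K$, weights $\boldsymbol{w} \in \Delta^{K-1}$, and let $C_{\boldsymbol{a}}$ be a barycenter of $\boldsymbol{a}$ with weights $\boldsymbol{w}$ (a minimizer of $C \mapsto \sum_s w_s d^2(a_s, C)$). Fix $\alpha \in [0,1]$ and suppose $\boldsymbol{b} = (b_1, \ldots, b_K) \in \mathcal{X}^K$ satisfies (P1): $d(a_s, C_{\boldsymbol{a}}) = d(a_s, b_s) + d(b_s, C_{\boldsymbol{a}})$ for all $s$, and (P2): $d(b_s, a_s) = (1 - \sqrt{\alpha}) d(a_s, C_{\boldsymbol{a}})$ for all $s$. Then $\boldsymbol{b}$ minimizes $\sum_{s=1}^K w_s d^2(b'_s, a_s)$ over all tuples $\boldsymbol{b}' \in \mathcal{X}^K$ satisfying the constraint $\sum_{s=1}^K w_s d^2(b'_s, C_{\boldsymbol{b}'}) \leq \alpha \sum_{s=1}^K w_s d^2(a_s, C_{\boldsymbol{a}})$,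 where $C_{\boldsymbol{b}'}$ denotes a barycenter of $\boldsymbol{b}'$. -/
open Finset

/-- Abstract geometric lemma (quadratic case): in a metric space with the barycenter
property, if each `b s` lies on a geodesic segment from `a s` to a barycenter `Cₐ`,
at relative distance `1 - √α` from `a s`, then `b` minimizes the weighted squared
distance to `a` among all tuples whose weighted squared distance to one of their own
barycenters is at most `α` times that of `a`. -/
theorem abstract_geometric_lemma
    {X : Type*} [MetricSpace X] (K : ℕ)
    (w : Fin K → ℝ) (hw_nonneg : ∀ s, 0 ≤ w s) (hw_sum : ∑ s, w s = 1)
    (hbary : ∀ a : Fin K → X, ∃ C : X,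
      ∀ C' : X, ∑ s, w s * dist (a s) C ^ 2 ≤ ∑ s, w s * dist (a s) C' ^ 2)
    (a : Fin K → X) (Ca : X)
    (hCa : ∀ C' : X, ∑ s, w s * dist (a s) Ca ^ 2 ≤ ∑ s, w s * dist (a s) C' ^ 2)
    (α : ℝ) (hα : α ∈ Set.Icc (0 : ℝ) 1)
    (b : Fin K → X)
    (hP1 : ∀ s, dist (a s) Ca = dist (a s) (b s) + dist (b s) Ca)
    (hP2 : ∀ s, dist (b s) (a s) = (1 - Real.sqrt α) * dist (a s) Ca) :
    (∃ Cb : X,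
      (∀ C' : X, ∑ s, w s * dist (b s) Cb ^ 2 ≤ ∑ s, w s * dist (b s) C' ^ 2) ∧
      ∑ s, w s * dist (b s) Cb ^ 2 ≤ α * ∑ s, w s * dist (a s) Ca ^ 2) ∧
    ∀ b' : Fin K → X,
      (∃ Cb' : X,
        (∀ C' : X, ∑ s, w s * dist (b' s) Cb' ^ 2 ≤ ∑ s, w s * dist (b' s) C' ^ 2) ∧
        ∑ s, w s * dist (b' s) Cb' ^ 2 ≤ α * ∑ s, w s * dist (a s) Ca ^ 2) →
      ∑ s, w s * dist (b s) (a s) ^ 2 ≤ ∑ s, w s * dist (b' s) (a s) ^ 2 := by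
  obtain ⟨hα0, hα1⟩ := hα
  have hsα0 : 0 ≤ Real.sqrt α := Real.sqrt_nonneg α
  have hsα1 : Real.sqrt α ≤ 1 := by
    rw [show (1:ℝ) = Real.sqrt 1 by simp]
    exact Real.sqrt_le_sqrt hα1
  set S := ∑ s, w s * dist (a s) Ca ^ 2 with hSdef
  have hS0 : 0 ≤ S :=
    Finset.sum_nonneg fun s _ => mul_nonneg (hw_nonneg s) (sq_nonneg _)
  have hbCa : ∀ s, dist (b s) Ca = Real.sqrt α * dist (a s) Ca := by
    intro s
    have h1 := hP1 s
    have h2 := hP2 s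
    rw [dist_comm (b s) (a s)] at h2
    linarith
  obtain ⟨Cb, hCb⟩ := hbary b
  constructor
  · refine ⟨Cb, hCb, ?_⟩
    calc ∑ s, w s * dist (b s) Cb ^ 2 ≤ ∑ s, w s * dist (b s) Ca ^ 2 := hCb Ca
      _ = α * S := by
        rw [hSdef, Finset.mul_sum]
        refine Finset.sum_congr rfl fun s _ => ?_
        rw [hbCa s, mul_pow, Real.sq_sqrt hα0]; ring
  · rintro b' ⟨Cb', hCb', hcon⟩
    have hLHS : ∑ s, w s * dist (b s) (a s) ^ 2 = (1 - Real.sqrt α) ^ 2 * S := by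
      rw [hSdef, Finset.mul_sum]
      refine Finset.sum_congr rfl fun s _ => ?_
      rw [hP2 s]; ring
    set X2 := ∑ s, w s * dist (b' s) (a s) ^ 2 with hX2def
    set B2 := ∑ s, w s * dist (b' s) Cb' ^ 2 with hB2def
    have hX20 : 0 ≤ X2 :=
      Finset.sum_nonneg fun s _ => mul_nonneg (hw_nonneg s) (sq_nonneg _)
    have hB20 : 0 ≤ B2 :=
      Finset.sum_nonneg fun s _ => mul_nonneg (hw_nonneg s) (sq_nonneg _)
    -- Cauchy-Schwarz
    have hcs : ∑ s, w s * (dist (b' s) (a s) * dist (b' s) Cb')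
        ≤ Real.sqrt X2 * Real.sqrt B2 := by
      have := Real.sum_mul_le_sqrt_mul_sqrt Finset.univ
        (fun s => Real.sqrt (w s) * dist (b' s) (a s))
        (fun s => Real.sqrt (w s) * dist (b' s) Cb')
      calc ∑ s, w s * (dist (b' s) (a s) * dist (b' s) Cb')
          = ∑ s, (Real.sqrt (w s) * dist (b' s) (a s)) *
              (Real.sqrt (w s) * dist (b' s) Cb') := by
            refine Finset.sum_congr rfl fun s _ => ?_
            have : Real.sqrt (w s) ^ 2 = w s :=
              Real.sq_sqrt (hw_nonneg s)
            linear_combination (-(dist (b' s) (a s) * dist (b' s) Cb')) * this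
        _ ≤ _ := by
            convert this using 3 <;>
            · refine Finset.sum_congr rfl fun s _ => ?_
              rw [mul_pow, Real.sq_sqrt (hw_nonneg s)]
        _ = Real.sqrt X2 * Real.sqrt B2 := rfl
    -- triangle inequality summed
    have htri : S ≤ X2 + 2 * (Real.sqrt X2 * Real.sqrt B2) + B2 := by
      have h1 : S ≤ ∑ s, w s * dist (a s) Cb' ^ 2 := hCa Cb'
      have h2 : ∑ s, w s * dist (a s) Cb' ^ 2 ≤
          ∑ s, w s * (dist (b' s) (a s) ^ 2 +
            2 * (dist (b' s) (a s) * dist (b' s) Cb') + dist (b' s) Cb' ^ 2) := by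
        refine Finset.sum_le_sum fun s _ => ?_
        refine mul_le_mul_of_nonneg_left ?_ (hw_nonneg s)
        have ht : dist (a s) Cb' ≤ dist (b' s) (a s) + dist (b' s) Cb' := by
          rw [dist_comm (b' s) (a s)]
          exact dist_triangle _ _ _
        nlinarith [dist_nonneg (x := a s) (y := Cb')]
      have h3 : ∑ s, w s * (dist (b' s) (a s) ^ 2 +
            2 * (dist (b' s) (a s) * dist (b' s) Cb') + dist (b' s) Cb' ^ 2)
          = X2 + 2 * ∑ s, w s * (dist (b' s) (a s) * dist (b' s) Cb') + B2 := by
        rw [hX2def, hB2def, Finset.mul_sum, ← Finset.sum_add_distrib,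
          ← Finset.sum_add_distrib]
        refine Finset.sum_congr rfl fun s _ => ?_
        ring
      nlinarith [hcs]
    -- conclude
    have hXs : Real.sqrt X2 ^ 2 = X2 := Real.sq_sqrt hX20
    have hBs : Real.sqrt B2 ^ 2 = B2 := Real.sq_sqrt hB20
    have hBle : Real.sqrt B2 ≤ Real.sqrt α * Real.sqrt S := by
      rw [← Real.sqrt_mul hα0]
      exact Real.sqrt_le_sqrt hcon
    have hSs : Real.sqrt S ^ 2 = S := Real.sq_sqrt hS0
    have hsum : Real.sqrt S ≤ Real.sqrt X2 + Real.sqrt B2 := by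
      have : S ≤ (Real.sqrt X2 + Real.sqrt B2) ^ 2 := by nlinarith
      nlinarith [Real.sqrt_nonneg X2, Real.sqrt_nonneg B2, Real.sqrt_nonneg S]
    have hkey : (1 - Real.sqrt α) * Real.sqrt S ≤ Real.sqrt X2 := by
      nlinarith
    rw [hLHS]
    have h1α : 0 ≤ 1 - Real.sqrt α := by linarith
    have hmul := mul_self_le_mul_self (mul_nonneg h1α (Real.sqrt_nonneg S)) hkey
    nlinarith [hmul]
end

section
/- Let $(\mathcal{X}, d)$ be a metric space satisfying the $q$-barycenter property for $q \in [1, \infty)$, $\boldsymbol{a} \in \mathcal{X}^K$, weights $\boldsymbol{w} \in \Delta^{K-1}$, and $C_{\boldsymbol{a}}$ a $q$-barycenter of $\boldsymbol{a}$. Fix $\alpha \in [0,1]$ and suppose $\boldsymbol{b} \in \mathcal{X}^K$ satisfies $d(a_s, C_{\boldsymbol{a}}) = d(a_s, b_s) + d(b_s, C_{\boldsymbol{a}})$ and $d(b_s, a_s) = (1 - \alpha^{1/q}) d(a_s, C_{\boldsymbol{a}})$ for all $s \in [K]$. Then $\left(\sum_{s=1}^K w_s d^q(b_s, C_{\boldsymbol{b}})\right)^{1/q}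 = \left(\sum_{s=1}^K w_s d^q(b_s, C_{\boldsymbol{a}})\right)^{1/q}$, where $C_{\boldsymbol{b}}$ is any $q$-barycenter of $\boldsymbol{b}$. -/
open Finset

/-- In a metric space with the `q`-barycenter property, if `b` lies on the geodesics
from `a` to a `q`-barycenter `Cₐ` at relative distance `1 - α^{1/q}`, then the weighted
`q`-distance of `b` to any of its own `q`-barycenters equals its weighted `q`-distance
to `Cₐ`. -/
theorem q_barycenters_coincide
    {X : Type*} [MetricSpace X] (K : ℕ) (q : ℝ) (hq : 1 ≤ q)
    (w : Fin K → ℝ) (hw_nonneg : ∀ s, 0 ≤ w s) (hw_sum : ∑ s, w s = 1)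
    (hbary : ∀ a : Fin K → X, ∃ C : X,
      ∀ C' : X, ∑ s, w s * dist (a s) C ^ q ≤ ∑ s, w s * dist (a s) C' ^ q)
    (a : Fin K → X) (Ca : X)
    (hCa : ∀ C' : X, ∑ s, w s * dist (a s) Ca ^ q ≤ ∑ s, w s * dist (a s) C' ^ q)
    (α : ℝ) (hα : α ∈ Set.Icc (0 : ℝ) 1)
    (b : Fin K → X)
    (hP1 : ∀ s, dist (a s) Ca = dist (a s) (b s) + dist (b s) Ca)
    (hP2 : ∀ s, dist (b s) (a s) = (1 - α ^ (1 / q)) * dist (a s) Ca)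
    (Cb : X)
    (hCb : ∀ C' : X, ∑ s, w s * dist (b s) Cb ^ q ≤ ∑ s, w s * dist (b s) C' ^ q) :
    (∑ s, w s * dist (b s) Cb ^ q) ^ (1 / q) =
      (∑ s, w s * dist (b s) Ca ^ q) ^ (1 / q) := by
  have hq0 : (0:ℝ) < q := lt_of_lt_of_le one_pos hq
  have hq0' : q ≠ 0 := ne_of_gt hq0
  set t : ℝ := α ^ (1 / q) with ht
  have ht0 : 0 ≤ t := Real.rpow_nonneg hα.1 _
  have ht1 : t ≤ 1 := Real.rpow_le_one hα.1 hα.2 (by positivity)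
  -- pointwise: dist (b s) Ca = t * dist (a s) Ca
  have hbCa : ∀ s, dist (b s) Ca = t * dist (a s) Ca := by
    intro s
    have h1 := hP1 s
    have h2 := hP2 s
    rw [dist_comm (b s) (a s)] at h2
    nlinarith [h1, h2]
  have habs : ∀ s, dist (a s) (b s) = (1 - t) * dist (a s) Ca := by
    intro s
    have h2 := hP2 s
    rw [dist_comm (b s) (a s)] at h2
    exact h2
  have hroot : ∀ x : ℝ, 0 ≤ x → (x ^ (1/q)) ^ q = x := fun x hx => by
    rw [← Real.rpow_mul hx, one_div_mul_cancel hq0', Real.rpow_one]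
  have hroot' : ∀ x : ℝ, 0 ≤ x → (x ^ q) ^ (1/q) = x := fun x hx => by
    rw [← Real.rpow_mul hx, mul_one_div_cancel hq0', Real.rpow_one]
  set A : ℝ := ∑ s, w s * dist (a s) Ca ^ q with hA
  have hA0 : 0 ≤ A := Finset.sum_nonneg fun s _ =>
    mul_nonneg (hw_nonneg s) (Real.rpow_nonneg dist_nonneg _)
  set B : ℝ := ∑ s, w s * dist (b s) Cb ^ q with hB
  have hB0 : 0 ≤ B := Finset.sum_nonneg fun s _ =>
    mul_nonneg (hw_nonneg s) (Real.rpow_nonneg dist_nonneg _)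
  -- ∑ w d(b,Ca)^q = t^q * A
  have hRHS : ∑ s, w s * dist (b s) Ca ^ q = t ^ q * A := by
    rw [hA, Finset.mul_sum]
    refine Finset.sum_congr rfl fun s _ => ?_
    rw [hbCa s, Real.mul_rpow ht0 dist_nonneg]
    ring
  -- upper bound: B ≤ t^q * A
  have hupper : B ≤ t ^ q * A := by
    rw [← hRHS]; exact hCb Ca
  -- lower bound via Minkowski
  have hmink : A ^ (1 / q) ≤ (1 - t) * A ^ (1 / q) + B ^ (1 / q) := by
    have step1 : A ≤ ∑ s, w s * dist (a s) Cb ^ q := hCa Cb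
    have step2 : ∑ s, w s * dist (a s) Cb ^ q ≤
        ∑ s, (w s ^ (1/q) * dist (a s) (b s) + w s ^ (1/q) * dist (b s) Cb) ^ q := by
      refine Finset.sum_le_sum fun s _ => ?_
      have hw := hw_nonneg s
      calc w s * dist (a s) Cb ^ q
          ≤ w s * (dist (a s) (b s) + dist (b s) Cb) ^ q := by
            refine mul_le_mul_of_nonneg_left ?_ hw
            exact Real.rpow_le_rpow dist_nonneg (dist_triangle _ _ _) (le_of_lt hq0)
        _ = (w s ^ (1/q) * dist (a s) (b s) + w s ^ (1/q) * dist (b s) Cb) ^ q := by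
            rw [← mul_add, Real.mul_rpow (Real.rpow_nonneg hw _)
              (add_nonneg dist_nonneg dist_nonneg), hroot _ hw]
    have step3 := Real.Lp_add_le_of_nonneg (f := fun s => w s ^ (1/q) * dist (a s) (b s))
      (g := fun s => w s ^ (1/q) * dist (b s) Cb) (s := Finset.univ) hq
      (fun s _ => mul_nonneg (Real.rpow_nonneg (hw_nonneg s) _) dist_nonneg)
      (fun s _ => mul_nonneg (Real.rpow_nonneg (hw_nonneg s) _) dist_nonneg)
    have hfq : ∑ s, (w s ^ (1/q) * dist (a s) (b s)) ^ q = (1 - t) ^ q * A := by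
      rw [hA, Finset.mul_sum]
      refine Finset.sum_congr rfl fun s _ => ?_
      have h1t : (0:ℝ) ≤ 1 - t := by linarith
      rw [habs s, Real.mul_rpow (Real.rpow_nonneg (hw_nonneg s) _)
        (mul_nonneg h1t dist_nonneg), Real.mul_rpow h1t dist_nonneg,
        hroot _ (hw_nonneg s)]
      ring
    have hgq : ∑ s, (w s ^ (1/q) * dist (b s) Cb) ^ q = B := by
      rw [hB]
      refine Finset.sum_congr rfl fun s _ => ?_
      rw [Real.mul_rpow (Real.rpow_nonneg (hw_nonneg s) _) dist_nonneg,
        hroot _ (hw_nonneg s)]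
    rw [hfq, hgq] at step3
    have h1t : (0:ℝ) ≤ 1 - t := by linarith
    have : ((1 - t) ^ q * A) ^ (1/q) = (1 - t) * A ^ (1/q) := by
      rw [Real.mul_rpow (Real.rpow_nonneg h1t _) hA0, hroot' _ h1t]
    rw [this] at step3
    calc A ^ (1/q) ≤ (∑ s, (w s ^ (1/q) * dist (a s) (b s) + w s ^ (1/q) * dist (b s) Cb) ^ q) ^ (1/q) :=
          Real.rpow_le_rpow hA0 (le_trans step1 step2) (by positivity)
      _ ≤ (1 - t) * A ^ (1/q) + B ^ (1/q) := step3
  have hlow : t * A ^ (1 / q) ≤ B ^ (1 / q) := by linarith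
  have hup : B ^ (1 / q) ≤ t * A ^ (1 / q) := by
    have : (t ^ q * A) ^ (1/q) = t * A ^ (1/q) := by
      rw [Real.mul_rpow (Real.rpow_nonneg ht0 _) hA0, hroot' _ ht0]
    rw [← this]
    exact Real.rpow_le_rpow hB0 hupper (by positivity)
  rw [hRHS]
  have : (t ^ q * A) ^ (1/q) = t * A ^ (1/q) := by
    rw [Real.mul_rpow (Real.rpow_nonneg ht0 _) hA0, hroot' _ ht0]
  rw [this]
  linarith
end

section
/- Let $\boldsymbol{w} \in \Delta^{K-1}$ be a probability vector and $m_s \in \mathbb{R}$, $\sigma_s \geq 0$ for $s \in [K]$. Then the minimizer over $\nu \in \mathcal{P}_2(\mathbb{R})$ of $\sum_{s=1}^K w_s \mathsf{W}_2^2(\mathcal{N}(m_s, \sigma_s^2), \nu)$ is the Gaussian $\mathcal{N}(\bar{m}, \bar{\sigma}^2)$ with $\bar{m} = \sum_{s=1}^K w_s m_s$ and $\bar{\sigma} = \sum_{s=1}^K w_s \sigma_s$. -/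
/-!
Write `a, b` for the means and `s, t` for the standard deviations of two laws on `ℝ`. For any
coupling, `E(X - Y)² = (a - b)² + s² + t² - 2 Cov(X, Y)`, and Cauchy–Schwarz `Cov ≤ s t` (the
discriminant of `u ↦ Var(X + u Y) ≥ 0`) gives `W₂² ≥ (a - b)² + (s - t)²`. For two Gaussians the
coupling `(m + σ Z, m' + σ' Z)` with `Z ~ N(0, 1)` attains this bound. So the objective at `ν` is
at least `∑ w_s ((m_s - a)² + (σ_s - t)²)` with `a, t` the mean and standard deviation of `ν`, a
weighted least-squares expression minimised by the weighted means `m̄, σ̄`, where it equals the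
objective at `N(m̄, σ̄²)`.
-/

open MeasureTheory ProbabilityTheory
open scoped NNReal

/-- The squared Wasserstein-2 distance between two measures on `ℝ`, defined as the
infimum over couplings of the expected squared difference. -/
noncomputable def W2sq (μ ν : Measure ℝ) : ℝ :=
  sInf {r : ℝ | ∃ π : Measure (ℝ × ℝ), IsProbabilityMeasure π ∧
    π.map Prod.fst = μ ∧ π.map Prod.snd = ν ∧ r = ∫ p, (p.1 - p.2) ^ 2 ∂π}

section Moments

variable {Ω : Type*} [MeasurableSpace Ω] {μ : Measure Ω} {X Y : Ω → ℝ}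

lemma covariance_le_sqrt_variance_mul_sqrt_variance [IsFiniteMeasure μ]
    (hX : MemLp X 2 μ) (hY : MemLp Y 2 μ) :
    cov[X, Y; μ] ≤ √Var[X; μ] * √Var[Y; μ] := by
  have hquad : ∀ t : ℝ, 0 ≤ Var[Y; μ] * (t * t) + 2 * cov[X, Y; μ] * t + Var[X; μ] := by
    intro t
    have h := variance_nonneg (X + t • Y) μ
    rw [variance_add hX (hY.const_smul t), variance_smul, covariance_smul_right] at h
    linarith
  have hdisc := discrim_le_zero hquad
  rw [discrim] at hdisc
  rw [← Real.sqrt_mul (variance_nonneg X μ)]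
  exact (le_abs_self _).trans (Real.abs_le_sqrt (by nlinarith))

lemma integral_sq_eq_variance_add_sq [IsProbabilityMeasure μ] (hX : MemLp X 2 μ) :
    ∫ ω, X ω ^ 2 ∂μ = Var[X; μ] + μ[X] ^ 2 := by
  rw [variance_eq_sub hX]
  simp

lemma sq_sub_add_sq_sqrt_variance_sub_le_integral_sq_sub [IsProbabilityMeasure μ]
    (hX : MemLp X 2 μ) (hY : MemLp Y 2 μ) :
    (μ[X] - μ[Y]) ^ 2 + (√Var[X; μ] - √Var[Y; μ]) ^ 2 ≤ ∫ ω, (X ω - Y ω) ^ 2 ∂μ := by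
  have hcov := covariance_le_sqrt_variance_mul_sqrt_variance hX hY
  have hsq := integral_sq_eq_variance_add_sq (hX.sub hY)
  rw [variance_sub hX hY, integral_sub' (hX.integrable one_le_two) (hY.integrable one_le_two)]
    at hsq
  change _ ≤ ∫ ω, (X - Y) ω ^ 2 ∂μ
  rw [hsq]
  nlinarith [Real.sq_sqrt (variance_nonneg X μ), Real.sq_sqrt (variance_nonneg Y μ)]

end Moments

lemma W2sq_le_integral {μ ν : Measure ℝ} (π : Measure (ℝ × ℝ)) [IsProbabilityMeasure π]
    (h₁ : π.map Prod.fst = μ) (h₂ : π.map Prod.snd = ν) :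
    W2sq μ ν ≤ ∫ p, (p.1 - p.2) ^ 2 ∂π :=
  csInf_le ⟨0, by rintro r ⟨π, -, -, -, rfl⟩; positivity⟩ ⟨π, inferInstance, h₁, h₂, rfl⟩

lemma sq_sub_add_sq_sqrt_variance_sub_le_W2sq {μ ν : Measure ℝ} [IsProbabilityMeasure μ]
    [IsProbabilityMeasure ν] (hμ : MemLp id 2 μ) (hν : MemLp id 2 ν) :
    (∫ x, x ∂μ - ∫ x, x ∂ν) ^ 2 + (√Var[id; μ] - √Var[id; ν]) ^ 2 ≤ W2sq μ ν := by
  refine le_csInf ⟨_, μ.prod ν, inferInstance, by simp, by simp, rfl⟩ ?_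
  rintro r ⟨π, hπ, rfl, rfl, rfl⟩
  rw [memLp_map_measure_iff aestronglyMeasurable_id measurable_fst.aemeasurable] at hμ
  rw [memLp_map_measure_iff aestronglyMeasurable_id measurable_snd.aemeasurable] at hν
  rw [integral_map measurable_fst.aemeasurable measurable_id'.aestronglyMeasurable,
    integral_map measurable_snd.aemeasurable measurable_id'.aestronglyMeasurable,
    variance_id_map measurable_fst.aemeasurable, variance_id_map measurable_snd.aemeasurable]
  exact sq_sub_add_sq_sqrt_variance_sub_le_integral_sq_sub hμ hν

lemma gaussianReal_map_const_add_mul (m : ℝ) (σ : ℝ≥0) :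
    (gaussianReal 0 1).map (fun z => m + σ * z) = gaussianReal m (σ ^ 2) := by
  have : (fun z : ℝ => m + σ * z) = (m + ·) ∘ (σ * ·) := rfl
  rw [this, ← Measure.map_map (by fun_prop) (by fun_prop), gaussianReal_map_const_mul,
    gaussianReal_map_const_add]
  congr 1
  · simp
  · ext; simp

lemma integral_sq_const_add_mul_gaussianReal_zero_one (a b : ℝ) :
    ∫ z, (a + b * z) ^ 2 ∂gaussianReal 0 1 = a ^ 2 + b ^ 2 := by
  have hZ : MemLp (fun z => z) 2 (gaussianReal 0 1) :=
    memLp_id_gaussianReal' 2 ENNReal.ofNat_ne_top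
  have haffine : MemLp (fun z => a + b * z) 2 (gaussianReal 0 1) :=
    (memLp_const a).add (hZ.const_mul b)
  rw [integral_sq_eq_variance_add_sq haffine,
    variance_const_add (by fun_prop), variance_const_mul, variance_fun_id_gaussianReal,
    integral_add (integrable_const _) ((hZ.integrable one_le_two).const_mul _),
    integral_const_mul, integral_id_gaussianReal]
  simp only [NNReal.coe_one, mul_one, integral_const, probReal_univ, smul_eq_mul, one_mul,
    mul_zero, add_zero]
  ring

lemma W2sq_gaussianReal_le (m m' : ℝ) (σ σ' : ℝ≥0) :
    W2sq (gaussianReal m (σ ^ 2)) (gaussianReal m' (σ' ^ 2)) ≤ (m - m') ^ 2 + (σ - σ' : ℝ) ^ 2 := by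
  let coupling := (gaussianReal 0 1).map fun z => (m + σ * z, m' + σ' * z)
  have : IsProbabilityMeasure coupling := Measure.isProbabilityMeasure_map (by fun_prop)
  refine (W2sq_le_integral coupling ?_ ?_).trans_eq ?_
  · rw [Measure.map_map (by fun_prop) (by fun_prop)]
    exact gaussianReal_map_const_add_mul m σ
  · rw [Measure.map_map (by fun_prop) (by fun_prop)]
    exact gaussianReal_map_const_add_mul m' σ'
  rw [integral_map (by fun_prop) (by fun_prop),
    ← integral_sq_const_add_mul_gaussianReal_zero_one]
  congr with z
  ring

lemma le_W2sq_gaussianReal (m : ℝ) (σ : ℝ≥0) {ν : Measure ℝ} [IsProbabilityMeasure ν]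
    (hν : MemLp id 2 ν) :
    (m - ∫ x, x ∂ν) ^ 2 + (σ - √Var[id; ν]) ^ 2 ≤ W2sq (gaussianReal m (σ ^ 2)) ν := by
  have h := sq_sub_add_sq_sqrt_variance_sub_le_W2sq
    (memLp_id_gaussianReal (μ := m) (v := σ ^ 2) 2) hν
  rwa [integral_id_gaussianReal, variance_id_gaussianReal, NNReal.coe_pow,
    Real.sqrt_sq σ.coe_nonneg] at h

lemma sum_mul_sq_sub_weightedMean_le {ι : Type*} [Fintype ι] {w : ι → ℝ} (hw : ∑ i, w i = 1)
    (c : ι → ℝ) (a : ℝ) :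
    ∑ i, w i * (c i - ∑ j, w j * c j) ^ 2 ≤ ∑ i, w i * (c i - a) ^ 2 := by
  set c' := ∑ j, w j * c j
  have hsplit : ∑ i, w i * (c i - a) ^ 2 = ∑ i, w i * (c i - c') ^ 2
      + 2 * (c' - a) * (∑ i, w i * c i - c' * ∑ i, w i) + (c' - a) ^ 2 * ∑ i, w i := by
    simp only [Finset.mul_sum, ← Finset.sum_sub_distrib, ← Finset.sum_add_distrib]
    exact Finset.sum_congr rfl fun i _ => by ring
  rw [hsplit, hw]
  nlinarith [sq_nonneg (c' - a)]

/-- The Wasserstein-2 barycenter of Gaussians `N(m_s, σ_s²)` with weights `w` is the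
Gaussian with mean `∑ w_s m_s` and standard deviation `∑ w_s σ_s`: it minimizes
`ν ↦ ∑ w_s W₂²(N(m_s, σ_s²), ν)` over probability measures with finite second moment. -/
theorem gaussian_barycenter (K : ℕ) (w : Fin K → ℝ)
    (hw_nonneg : ∀ s, 0 ≤ w s) (hw_sum : ∑ s, w s = 1)
    (m : Fin K → ℝ) (σ : Fin K → ℝ≥0) :
    ∀ ν : Measure ℝ, IsProbabilityMeasure ν →
      Integrable (fun x => x ^ 2) ν →
      ∑ s, w s * W2sq (gaussianReal (m s) (σ s ^ 2))
          (gaussianReal (∑ s', w s' * m s') ((∑ s', ‖w s'‖₊ * σ s') ^ 2)) ≤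
        ∑ s, w s * W2sq (gaussianReal (m s) (σ s ^ 2)) ν := by
  intro ν hν hν_sq
  have hν_L2 : MemLp id 2 ν := (memLp_two_iff_integrable_sq aestronglyMeasurable_id).2 hν_sq
  have hσ_mean : ((∑ s', ‖w s'‖₊ * σ s' : ℝ≥0) : ℝ) = ∑ s', w s' * σ s' := by
    push_cast
    exact Finset.sum_congr rfl fun s _ => by rw [Real.norm_of_nonneg (hw_nonneg s)]
  calc _ ≤ ∑ s, w s * ((m s - ∑ s', w s' * m s') ^ 2 + (σ s - ∑ s', w s' * σ s' : ℝ) ^ 2) := by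
        gcongr with s
        · exact hw_nonneg s
        · exact hσ_mean ▸ W2sq_gaussianReal_le _ _ _ _
    _ ≤ ∑ s, w s * ((m s - ∫ x, x ∂ν) ^ 2 + (σ s - √Var[id; ν]) ^ 2) := by
        simp only [mul_add, Finset.sum_add_distrib]
        exact add_le_add (sum_mul_sq_sub_weightedMean_le hw_sum m _)
          (sum_mul_sq_sub_weightedMean_le hw_sum (fun s => (σ s : ℝ)) _)
    _ ≤ _ := by
        gcongr with s
        · exact hw_nonneg s
        · exact le_W2sq_gaussianReal _ _ hν_L2
end

section
/- Let $V_1, \ldots, V_n, V_{n+1}$ be exchangeable real-valued random variables and let $U$ be uniformly distributed on $[0,1]$ and independent of $(V_1, \ldots, V_{n+1})$. Then the statistic $T = \frac{1}{n+1}\left(\sum_{i=1}^n \mathbb{1}\{V_i < V_{n+1}\} + U \cdot \left(1 + \sum_{i=1}^n \mathbb{1}\{V_i = V_{n+1}\}\right)\right)$ is uniformly distributed on $[0,1]$. -/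
/-!
Given `V = v`, the statistic is uniform on `[a, a + k] / (n + 1)`, where `a` counts the `v i`
strictly below `v (last n)` and `k` those equal to it, so `P(T ≤ t | V = v)` is an explicit
piecewise-linear function of `(n + 1) t`. Exchangeability lets us replace `last n` by any index
and average over all of them. The tie classes occupy consecutive blocks `[a, a + k)` of ranks
tiling `{0, …, n}`, each block shared by its `k` members, so the average is `min (max t 0) 1`.
-/

open Finset MeasureTheory ProbabilityTheory ENNReal

theorem min_max_zero_natCast_eq_sum_range (y : ℝ) (K : ℕ) :
    min (max y 0) K = ∑ r ∈ range K, min (max (y - r) 0) 1 := by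
  induction K with
  | zero => simp
  | succ K ih =>
    rw [sum_range_succ, ← ih]
    push_cast
    simp only [min_def, max_def]
    split_ifs <;> linarith

theorem min_max_zero_natCast_eq_sum_Ico (x : ℝ) (L K : ℕ) :
    min (max (x - L) 0) K = ∑ m ∈ Ico L (L + K), min (max (x - m) 0) 1 := by
  simp only [min_max_zero_natCast_eq_sum_range, sum_Ico_eq_sum_range, Nat.add_sub_cancel_left,
    Nat.cast_add, sub_sub]

section Ranks

variable {ι α : Type*} [Fintype ι] [LinearOrder α] (v : ι → α)

def countLt (j : ι) : ℕ := #{i | v i < v j}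

def countEq (j : ι) : ℕ := #{i | v i = v j}

/-- The block of ranks occupied by the tie class of `j`. -/
def tieRanks (j : ι) : Finset ℕ := Ico (countLt v j) (countLt v j + countEq v j)

variable {v}

theorem countEq_pos (j : ι) : 0 < countEq v j :=
  card_pos.2 ⟨j, by simp⟩

theorem countLt_add_countEq (j : ι) : countLt v j + countEq v j = #{i | v i ≤ v j} := by
  classical
  rw [countLt, countEq, ← card_union_of_disjoint (disjoint_filter.2 fun _ _ h => h.ne)]
  simp only [← filter_or, le_iff_lt_or_eq]

theorem countLt_congr {j j' : ι} (h : v j = v j') : countLt v j = countLt v j' := by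
  simp only [countLt, h]

theorem countEq_congr {j j' : ι} (h : v j = v j') : countEq v j = countEq v j' := by
  simp only [countEq, h]

theorem tieRanks_subset_range (j : ι) : tieRanks v j ⊆ range (Fintype.card ι) := by
  intro m hm
  have := card_filter_le (univ : Finset ι) (fun i => v i ≤ v j)
  rw [tieRanks, mem_Ico, countLt_add_countEq] at hm
  rw [mem_range, ← card_univ]
  omega

theorem countLt_add_countEq_le_countLt {j j' : ι} (h : v j < v j') :
    countLt v j + countEq v j ≤ countLt v j' := by
  rw [countLt_add_countEq]
  exact card_le_card fun i => by simpa using fun hi => hi.trans_lt h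

theorem eq_of_mem_tieRanks {m : ℕ} {j j' : ι} (hj : m ∈ tieRanks v j)
    (hj' : m ∈ tieRanks v j') :
    v j = v j' := by
  rw [tieRanks, mem_Ico] at hj hj'
  rcases lt_trichotomy (v j) (v j') with h | h | h
  · have := countLt_add_countEq_le_countLt h; omega
  · exact h
  · have := countLt_add_countEq_le_countLt h; omega

theorem countLt_add_countEq_eq_countLt {i j : ι} (hij : v i < v j)
    (hmax : ∀ i', v i' < v j → v i' ≤ v i) : countLt v i + countEq v i = countLt v j := by
  rw [countLt_add_countEq, countLt]
  congr 1
  ext i'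
  simp only [mem_filter, mem_univ, true_and]
  exact ⟨fun h => h.trans_lt hij, hmax i'⟩

theorem exists_mem_tieRanks {m : ℕ} (hm : m < Fintype.card ι) : ∃ j, m ∈ tieRanks v j := by
  have hne : Nonempty ι := Fintype.card_pos_iff.1 (by omega)
  obtain ⟨jmax, -, hjmax⟩ := exists_max_image univ v univ_nonempty
  have hS : (univ.filter fun j => m < countLt v j + countEq v j).Nonempty := by
    refine ⟨jmax, mem_filter.2 ⟨mem_univ _, ?_⟩⟩
    rwa [countLt_add_countEq, filter_true_of_mem fun i _ => hjmax i (mem_univ i), card_univ]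
  obtain ⟨j, hjS, hjmin⟩ := exists_min_image _ v hS
  refine ⟨j, mem_Ico.2 ⟨?_, (mem_filter.1 hjS).2⟩⟩
  by_contra! hlt
  have hbelow : (univ.filter fun i => v i < v j).Nonempty := card_pos.1 (by rw [← countLt]; omega)
  obtain ⟨i, hi, himax⟩ := exists_max_image _ v hbelow
  rw [mem_filter] at hi
  have hiS := countLt_add_countEq_eq_countLt hi.2 fun i' hi' => himax i' (by simpa using hi')
  exact (hjmin i (by simpa [hiS] using hlt)).not_gt hi.2

theorem sum_inv_countEq_of_mem_tieRanks {m : ℕ} (hm : m < Fintype.card ι) :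
    ∑ j with m ∈ tieRanks v j, (countEq v j : ℝ)⁻¹ = 1 := by
  obtain ⟨j₀, hj₀⟩ := exists_mem_tieRanks (v := v) hm
  have hclass :
      univ.filter (fun j => m ∈ tieRanks v j) = univ.filter (fun j => v j = v j₀) := by
    ext j
    simp only [mem_filter, mem_univ, true_and]
    refine ⟨fun hj => eq_of_mem_tieRanks hj hj₀, fun hj => ?_⟩
    rwa [tieRanks, countLt_congr hj, countEq_congr hj]
  rw [hclass, sum_congr rfl fun j hj => by rw [countEq_congr (mem_filter.1 hj).2], sum_const,
    nsmul_eq_mul]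
  exact mul_inv_cancel₀ (Nat.cast_ne_zero.2 (countEq_pos j₀).ne')

theorem countLt_comp_perm (σ : Equiv.Perm ι) (j : ι) :
    countLt (fun i => v (σ i)) j = countLt v (σ j) :=
  card_equiv σ fun i => by simp

theorem countEq_comp_perm (σ : Equiv.Perm ι) (j : ι) :
    countEq (fun i => v (σ i)) j = countEq v (σ j) :=
  card_equiv σ fun i => by simp

/-- Splitting `[0, x]` at the integers, each unit piece `[m, m + 1]` below `card ι` lies in the
`tieRanks` of exactly one tie class, whose `countEq` members share it equally. -/
theorem sum_min_max_div_countEq (x : ℝ) :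
    ∑ j, min (max (x - countLt v j) 0) (countEq v j) / countEq v j =
      min (max x 0) (Fintype.card ι) := by
  have hsplit : ∀ j, min (max (x - countLt v j) 0) (countEq v j) / countEq v j =
      ∑ m ∈ range (Fintype.card ι),
        if m ∈ tieRanks v j then min (max (x - m) 0) 1 / countEq v j else 0 := by
    intro j
    rw [sum_ite_mem, inter_eq_right.2 (tieRanks_subset_range j), tieRanks,
      min_max_zero_natCast_eq_sum_Ico, sum_div]
  rw [sum_congr rfl fun j _ => hsplit j, sum_comm, min_max_zero_natCast_eq_sum_range]
  refine sum_congr rfl fun m hm => ?_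
  simp only [div_eq_mul_inv, ← sum_filter, ← mul_sum]
  rw [sum_inv_countEq_of_mem_tieRanks (mem_range.1 hm), mul_one]

end Ranks

section Exchangeable

variable {ι β : Type*} [Fintype ι] [MeasurableSpace β]

def Exchangeable (μ : Measure (ι → β)) : Prop :=
  ∀ σ : Equiv.Perm ι, μ.map (fun v i => v (σ i)) = μ

theorem Exchangeable.lintegral_sum_eq_card_mul {μ : Measure (ι → β)} (hμ : Exchangeable μ)
    {f : (ι → β) → ι → ℝ≥0∞} (hf : ∀ j, Measurable fun v => f v j)
    (hfσ : ∀ (σ : Equiv.Perm ι) v j, f (fun i => v (σ i)) j = f v (σ j)) (j : ι) :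
    ∫⁻ v, ∑ i, f v i ∂μ = Fintype.card ι * ∫⁻ v, f v j ∂μ := by
  classical
  have hperm : ∀ i, ∫⁻ v, f v i ∂μ = ∫⁻ v, f v j ∂μ := fun i => by
    have hσ : Measurable fun v : ι → β => fun k => v (Equiv.swap j i k) :=
      measurable_pi_lambda _ fun k => measurable_pi_apply _
    conv_rhs => rw [← hμ (Equiv.swap j i), lintegral_map (hf j) hσ]
    simp only [hfσ, Equiv.swap_apply_left]
  rw [lintegral_finsetSum _ fun i _ => hf i, sum_congr rfl fun i _ => hperm i, sum_const,
    card_univ, nsmul_eq_mul]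

end Exchangeable

section RandomizedRank

variable {ι α : Type*} [Fintype ι] [LinearOrder α]

theorem measurable_countLt (j : ι) : Measurable fun v : ι → ℝ => countLt v j := by
  simp only [countLt, card_filter]
  exact Finset.measurable_sum _ fun i _ => Measurable.ite
    (measurableSet_lt (measurable_pi_apply i) (measurable_pi_apply j)) measurable_const
    measurable_const

theorem measurable_countEq (j : ι) : Measurable fun v : ι → ℝ => countEq v j := by
  simp only [countEq, card_filter]
  exact Finset.measurable_sum _ fun i _ => Measurable.ite
    (measurableSet_eq_fun (measurable_pi_apply i) (measurable_pi_apply j)) measurable_const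
    measurable_const

theorem restrict_Icc_zero_one_Iic (c : ℝ) :
    volume.restrict (Set.Icc (0 : ℝ) 1) (Set.Iic c) = ENNReal.ofReal (min (max c 0) 1) := by
  have hset : Set.Iic c ∩ Set.Icc 0 1 = Set.Icc 0 (min 1 c) := by
    ext u
    simp only [Set.mem_inter_iff, Set.mem_Iic, Set.mem_Icc, le_min_iff]
    tauto
  rw [Measure.restrict_apply measurableSet_Iic, hset, Real.volume_Icc, sub_zero, min_comm]
  rcases le_total c 0 with hc | hc
  · rw [max_eq_right hc, min_eq_left zero_le_one, ofReal_zero]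
    exact ofReal_of_nonpos ((min_le_left _ _).trans hc)
  · rw [max_eq_left hc]

theorem restrict_Icc_zero_one_setOf_add_mul_le {a k x : ℝ} (hk : 0 < k) :
    volume.restrict (Set.Icc (0 : ℝ) 1) {u | a + u * k ≤ x} =
      ENNReal.ofReal (min (max (x - a) 0) k / k) := by
  have hset : {u | a + u * k ≤ x} = Set.Iic ((x - a) / k) := by
    ext u
    simp only [Set.mem_ofPred_eq, Set.mem_Iic, le_div_iff₀ hk]
    constructor <;> intro h <;> linarith
  rw [hset, restrict_Icc_zero_one_Iic, ← min_div_div_right hk.le, ← max_div_div_right hk.le,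
    zero_div, div_self hk.ne']

noncomputable def randomizedRank (v : ι → α) (j : ι) (u : ℝ) : ℝ :=
  1 / Fintype.card ι * (countLt v j + u * countEq v j)

theorem measurable_randomizedRank (j : ι) :
    Measurable fun p : (ι → ℝ) × ℝ => randomizedRank p.1 j p.2 := by
  have := measurable_countLt j
  have := measurable_countEq j
  unfold randomizedRank
  fun_prop

theorem restrict_Icc_zero_one_setOf_randomizedRank_le (v : ι → α) (j : ι) (t : ℝ) :
    volume.restrict (Set.Icc (0 : ℝ) 1) {u | randomizedRank v j u ≤ t} =
      ENNReal.ofReal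
        (min (max (Fintype.card ι * t - countLt v j) 0) (countEq v j) / countEq v j) := by
  have hN : (0 : ℝ) < Fintype.card ι := Nat.cast_pos.2 (Fintype.card_pos_iff.2 ⟨j⟩)
  have hset : {u | randomizedRank v j u ≤ t} =
      {u | countLt v j + u * countEq v j ≤ Fintype.card ι * t} := by
    ext u
    rw [Set.mem_ofPred_eq, Set.mem_ofPred_eq, randomizedRank, one_div, inv_mul_le_iff₀ hN]
  rw [hset, restrict_Icc_zero_one_setOf_add_mul_le (Nat.cast_pos.2 (countEq_pos j))]

theorem Exchangeable.map_prod_randomizedRank {μ : Measure (ι → ℝ)} [IsProbabilityMeasure μ]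
    (hμ : Exchangeable μ) (j : ι) :
    (μ.prod (volume.restrict (Set.Icc (0 : ℝ) 1))).map (fun p => randomizedRank p.1 j p.2) =
      volume.restrict (Set.Icc (0 : ℝ) 1) := by
  set N := Fintype.card ι
  have hN : (0 : ℝ) < N := Nat.cast_pos.2 (Fintype.card_pos_iff.2 ⟨j⟩)
  refine Measure.ext_of_Iic _ _ fun t => ?_
  set x := N * t
  set f : (ι → ℝ) → ι → ℝ≥0∞ := fun v i =>
    ENNReal.ofReal (min (max (x - countLt v i) 0) (countEq v i) / countEq v i) with hfdef
  have hf : ∀ i, Measurable fun v => f v i := fun i => by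
    have := measurable_countLt i
    have := measurable_countEq i
    fun_prop
  have hfσ : ∀ (σ : Equiv.Perm ι) v i, f (fun k => v (σ k)) i = f v (σ i) := by
    simp only [hfdef, countLt_comp_perm, countEq_comp_perm, implies_true]
  have hsection : ∀ v, volume.restrict (Set.Icc (0 : ℝ) 1)
      (Prod.mk v ⁻¹' ((fun p => randomizedRank p.1 j p.2) ⁻¹' Set.Iic t)) = f v j :=
    fun v => restrict_Icc_zero_one_setOf_randomizedRank_le v j t
  have hsum : ∀ v, ∑ i, f v i = ENNReal.ofReal (min (max x 0) N) := fun v => by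
    rw [← ofReal_sum_of_nonneg fun i _ => by positivity, sum_min_max_div_countEq]
  have hNne : (N : ℝ≥0∞) ≠ 0 := Nat.cast_ne_zero.2 (Nat.cast_pos.1 hN).ne'
  rw [Measure.map_apply (measurable_randomizedRank j) measurableSet_Iic,
    Measure.prod_apply (measurable_randomizedRank j measurableSet_Iic), lintegral_congr hsection,
    ← ENNReal.mul_right_inj hNne (natCast_ne_top N), ← hμ.lintegral_sum_eq_card_mul hf hfσ j,
    lintegral_congr hsum, lintegral_const, measure_univ, mul_one, restrict_Icc_zero_one_Iic,
    ← ofReal_natCast, ← ofReal_mul hN.le, mul_min_of_nonneg _ _ hN.le,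
    mul_max_of_nonneg _ _ hN.le, mul_zero, mul_one]

end RandomizedRank

theorem natCast_countLt_last {α : Type*} [LinearOrder α] {n : ℕ} (v : Fin (n + 1) → α) :
    (countLt v (Fin.last n) : ℝ) =
      ∑ i : Fin n, if v i.castSucc < v (Fin.last n) then (1 : ℝ) else 0 := by
  rw [countLt, card_filter, Nat.cast_sum, Fin.sum_univ_castSucc]
  simp

theorem natCast_countEq_last {α : Type*} [LinearOrder α] {n : ℕ} (v : Fin (n + 1) → α) :
    (countEq v (Fin.last n) : ℝ) =
      1 + ∑ i : Fin n, if v i.castSucc = v (Fin.last n) then (1 : ℝ) else 0 := by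
  rw [countEq, card_filter, Nat.cast_sum, Fin.sum_univ_castSucc]
  simp [add_comm]

/-- If `V 0, …, V n` are exchangeable real random variables and `U` is uniform on
`[0,1]` and independent of them, then the randomized rank statistic
`T = (∑_{i<n} 1{V i < V n} + U (1 + ∑_{i<n} 1{V i = V n})) / (n+1)`
is uniformly distributed on `[0,1]`. -/
theorem randomized_rank_uniform
    {Ω : Type*} [MeasurableSpace Ω] (P : Measure Ω) [IsProbabilityMeasure P]
    (n : ℕ) (V : Fin (n + 1) → Ω → ℝ) (U : Ω → ℝ)
    (hV : ∀ i, Measurable (V i)) (hU : Measurable U)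
    (hexch : ∀ σ : Equiv.Perm (Fin (n + 1)),
      P.map (fun ω => (fun i => V (σ i) ω)) = P.map (fun ω => (fun i => V i ω)))
    (hUunif : P.map U = volume.restrict (Set.Icc (0 : ℝ) 1))
    (hindep : IndepFun U (fun ω => (fun i => V i ω)) P) :
    P.map (fun ω =>
        (1 / (n + 1 : ℝ)) *
          ((∑ i : Fin n, if V i.castSucc ω < V (Fin.last n) ω then (1 : ℝ) else 0) +
            U ω * (1 + ∑ i : Fin n,
              if V i.castSucc ω = V (Fin.last n) ω then (1 : ℝ) else 0))) =
      volume.restrict (Set.Icc (0 : ℝ) 1) := by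
  have hVm : Measurable fun ω i => V i ω := measurable_pi_lambda _ hV
  have := Measure.isProbabilityMeasure_map (μ := P) hVm.aemeasurable
  have hμ : Exchangeable (P.map fun ω i => V i ω) := fun σ => by
    rw [Measure.map_map (measurable_pi_lambda _ fun i => measurable_pi_apply (σ i)) hVm]
    exact hexch σ
  have hlaw : P.map (fun ω => ((fun i => V i ω), U ω)) =
      (P.map fun ω i => V i ω).prod (volume.restrict (Set.Icc (0 : ℝ) 1)) := by
    rw [← hUunif]
    exact (indepFun_iff_map_prod_eq_prod_map_map hVm.aemeasurable hU.aemeasurable).1 hindep.symm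
  have hT := hμ.map_prod_randomizedRank (Fin.last n)
  rw [← hlaw, Measure.map_map (measurable_randomizedRank _) (hVm.prodMk hU)] at hT
  convert hT using 2
  ext ω
  simp only [Function.comp_apply, randomizedRank, natCast_countLt_last, natCast_countEq_last,
    Fintype.card_fin, Nat.cast_add, Nat.cast_one]
end

section
/- Let $A$ and $B$ be real-valued random variables (with an arbitrary joint distribution), with cumulative distribution functions $F_A$ and $F_B$ respectively. Assume $B$ has a density with respect to Lebesgue measure bounded by $C_B$. Then $\mathbb{E}[|F_A(A) - F_B(B)|] \leq 4 C_B \, \mathbb{E}|A - B|$. -/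
open MeasureTheory ProbabilityTheory

/-- Case analysis for the event `A' ≤ a ∧ b < B'`. -/
lemma cdf_aux1 {a b a' b' : ℝ} (h1 : a' ≤ a) (h2 : ¬ b' ≤ b) :
    b' ∈ Set.Ioc b (b + 2 * max (a - b) 0) ∨
      b ∈ Set.Ico (b' - 2 * max (b' - a') 0) b' := by
  push_neg at h2
  have m1 := le_max_left (a - b) 0
  have m2 := le_max_left (b' - a') 0
  rcases le_total (max (b' - a') 0) (max (a - b) 0) with hc | hc
  · exact Or.inl ⟨h2, by linarith⟩
  · exact Or.inr ⟨by linarith, h2⟩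

/-- Case analysis for the event `B' ≤ b ∧ a < A'`. -/
lemma cdf_aux2 {a b a' b' : ℝ} (h1 : b' ≤ b) (h2 : ¬ a' ≤ a) :
    b' ∈ Set.Icc (b - 2 * max (b - a) 0) b ∨
      b ∈ Set.Icc b' (b' + 2 * max (a' - b') 0) := by
  push_neg at h2
  have m1 := le_max_left (b - a) 0
  have m2 := le_max_left (a' - b') 0
  rcases le_total (max (a' - b') 0) (max (b - a) 0) with hc | hc
  · exact Or.inl ⟨by linarith, h1⟩
  · exact Or.inr ⟨h1, by linarith⟩

/-- If `B` admits a Lebesgue density bounded by `C_B`, then for any coupling of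
`A` and `B`, `E|F_A(A) - F_B(B)| ≤ 4 C_B E|A - B|`, where `F_A`, `F_B` are the CDFs. -/
theorem cdf_difference_expectation_bound
    {Ω : Type*} [MeasurableSpace Ω] (P : Measure Ω) [IsProbabilityMeasure P]
    (A B : Ω → ℝ) (hA : Measurable A) (hB : Measurable B)
    (CB : ℝ) (fB : ℝ → ℝ)
    (hfB_nonneg : ∀ x, 0 ≤ fB x) (hfB_bdd : ∀ x, fB x ≤ CB)
    (hdens : P.map B = volume.withDensity (fun x => ENNReal.ofReal (fB x)))
    (hint : Integrable (fun ω => |A ω - B ω|) P) :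
    let FA : ℝ → ℝ := fun t => (P {ω | A ω ≤ t}).toReal
    let FB : ℝ → ℝ := fun t => (P {ω | B ω ≤ t}).toReal
    ∫ ω, |FA (A ω) - FB (B ω)| ∂P ≤ 4 * CB * ∫ ω, |A ω - B ω| ∂P := by
  intro FA FB
  have hCB : 0 ≤ CB := le_trans (hfB_nonneg 0) (hfB_bdd 0)
  have hintnn : 0 ≤ ∫ ω, |A ω - B ω| ∂P := integral_nonneg fun ω => abs_nonneg _
  -- density bound on intervals
  have hμB : ∀ s : Set ℝ, MeasurableSet s →
      P (B ⁻¹' s) ≤ ENNReal.ofReal CB * volume s := by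
    intro s hs
    rw [← Measure.map_apply hB hs, hdens, withDensity_apply _ hs]
    calc ∫⁻ x in s, ENNReal.ofReal (fB x) ∂volume
        ≤ ∫⁻ _ in s, ENNReal.ofReal CB ∂volume :=
          lintegral_mono fun x => ENNReal.ofReal_le_ofReal (hfB_bdd x)
      _ = ENNReal.ofReal CB * volume s := setLIntegral_const s _
  -- measurable helper functions on the product
  have hA1 : Measurable fun p : Ω × Ω => A p.1 := hA.comp measurable_fst
  have hA2 : Measurable fun p : Ω × Ω => A p.2 := hA.comp measurable_snd
  have hB1 : Measurable fun p : Ω × Ω => B p.1 := hB.comp measurable_fst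
  have hB2 : Measurable fun p : Ω × Ω => B p.2 := hB.comp measurable_snd
  -- the product sets
  set UE1 : Set (Ω × Ω) := {p | A p.2 ≤ A p.1} ∩ {p | B p.2 ≤ B p.1}ᶜ with hUE1def
  set UE2 : Set (Ω × Ω) := {p | B p.2 ≤ B p.1} ∩ {p | A p.2 ≤ A p.1}ᶜ with hUE2def
  set UG1 : Set (Ω × Ω) :=
    {p | B p.2 ∈ Set.Ioc (B p.1) (B p.1 + 2 * max (A p.1 - B p.1) 0)} with hUG1def
  set UG2 : Set (Ω × Ω) :=
    {p | B p.1 ∈ Set.Ico (B p.2 - 2 * max (B p.2 - A p.2) 0) (B p.2)} with hUG2def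
  set UG3 : Set (Ω × Ω) :=
    {p | B p.2 ∈ Set.Icc (B p.1 - 2 * max (B p.1 - A p.1) 0) (B p.1)} with hUG3def
  set UG4 : Set (Ω × Ω) :=
    {p | B p.1 ∈ Set.Icc (B p.2) (B p.2 + 2 * max (A p.2 - B p.2) 0)} with hUG4def
  have hUE1m : MeasurableSet UE1 :=
    (measurableSet_le hA2 hA1).inter (measurableSet_le hB2 hB1).compl
  have hUE2m : MeasurableSet UE2 :=
    (measurableSet_le hB2 hB1).inter (measurableSet_le hA2 hA1).compl
  have hentry1 : Measurable fun p : Ω × Ω => B p.1 + 2 * max (A p.1 - B p.1) 0 :=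
    hB1.add (((hA1.sub hB1).max measurable_const).const_mul 2)
  have hentry2 : Measurable fun p : Ω × Ω => B p.2 - 2 * max (B p.2 - A p.2) 0 :=
    hB2.sub (((hB2.sub hA2).max measurable_const).const_mul 2)
  have hentry3 : Measurable fun p : Ω × Ω => B p.1 - 2 * max (B p.1 - A p.1) 0 :=
    hB1.sub (((hB1.sub hA1).max measurable_const).const_mul 2)
  have hentry4 : Measurable fun p : Ω × Ω => B p.2 + 2 * max (A p.2 - B p.2) 0 :=
    hB2.add (((hA2.sub hB2).max measurable_const).const_mul 2)
  have hUG1m : MeasurableSet UG1 :=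
    (measurableSet_lt hB1 hB2).inter (measurableSet_le hB2 hentry1)
  have hUG2m : MeasurableSet UG2 :=
    (measurableSet_le hentry2 hB1).inter (measurableSet_lt hB1 hB2)
  have hUG3m : MeasurableSet UG3 :=
    (measurableSet_le hentry3 hB2).inter (measurableSet_le hB2 hB1)
  have hUG4m : MeasurableSet UG4 :=
    (measurableSet_le hB2 hB1).inter (measurableSet_le hB1 hentry4)
  -- inclusions
  have hsub1 : UE1 ⊆ UG1 ∪ UG2 := fun p hp => cdf_aux1 hp.1 hp.2
  have hsub2 : UE2 ⊆ UG3 ∪ UG4 := fun p hp => cdf_aux2 hp.1 hp.2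
  -- pointwise step 1
  have key1 : ∀ ω, ENNReal.ofReal |FA (A ω) - FB (B ω)| ≤
      P (Prod.mk ω ⁻¹' UE1) + P (Prod.mk ω ⁻¹' UE2) := by
    intro ω
    set S : Set Ω := {ω' | A ω' ≤ A ω} with hSdef
    set T : Set Ω := {ω' | B ω' ≤ B ω} with hTdef
    have hpre1 : Prod.mk ω ⁻¹' UE1 = S \ T := rfl
    have hpre2 : Prod.mk ω ⁻¹' UE2 = T \ S := rfl
    rw [hpre1, hpre2]
    have hfin : P (S \ T) + P (T \ S) ≠ ⊤ :=
      ENNReal.add_ne_top.mpr ⟨measure_ne_top _ _, measure_ne_top _ _⟩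
    have h1 : P S ≤ P T + P (S \ T) := by
      refine (measure_mono ?_).trans (measure_union_le _ _)
      intro x hx
      by_cases hxT : x ∈ T
      · exact Or.inl hxT
      · exact Or.inr ⟨hx, hxT⟩
    have h2 : P T ≤ P S + P (T \ S) := by
      refine (measure_mono ?_).trans (measure_union_le _ _)
      intro x hx
      by_cases hxS : x ∈ S
      · exact Or.inl hxS
      · exact Or.inr ⟨hx, hxS⟩
    have habs : |FA (A ω) - FB (B ω)| ≤ (P (S \ T) + P (T \ S)).toReal := by
      have hFAe : FA (A ω) = (P S).toReal := rfl
      have hFBe : FB (B ω) = (P T).toReal := rfl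
      have t1 : (P S).toReal ≤ (P T).toReal + (P (S \ T)).toReal := by
        have := ENNReal.toReal_mono (ENNReal.add_ne_top.mpr
          ⟨measure_ne_top _ _, measure_ne_top _ _⟩) h1
        rwa [ENNReal.toReal_add (measure_ne_top _ _) (measure_ne_top _ _)] at this
      have t2 : (P T).toReal ≤ (P S).toReal + (P (T \ S)).toReal := by
        have := ENNReal.toReal_mono (ENNReal.add_ne_top.mpr
          ⟨measure_ne_top _ _, measure_ne_top _ _⟩) h2
        rwa [ENNReal.toReal_add (measure_ne_top _ _) (measure_ne_top _ _)] at this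
      rw [hFAe, hFBe, ENNReal.toReal_add (measure_ne_top _ _) (measure_ne_top _ _),
        abs_sub_le_iff]
      constructor
      · have := ENNReal.toReal_nonneg (a := P (T \ S)); linarith
      · have := ENNReal.toReal_nonneg (a := P (S \ T)); linarith
    calc ENNReal.ofReal |FA (A ω) - FB (B ω)|
        ≤ ENNReal.ofReal ((P (S \ T) + P (T \ S)).toReal) := ENNReal.ofReal_le_ofReal habs
      _ = P (S \ T) + P (T \ S) := ENNReal.ofReal_toReal hfin
  -- interval measure bounds
  have m1 : ∀ ω, P (B ⁻¹' Set.Ioc (B ω) (B ω + 2 * max (A ω - B ω) 0))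
      ≤ ENNReal.ofReal CB * ENNReal.ofReal (2 * max (A ω - B ω) 0) := by
    intro ω
    have := hμB _ (measurableSet_Ioc (a := B ω) (b := B ω + 2 * max (A ω - B ω) 0))
    simpa [Real.volume_Ioc] using this
  have m2 : ∀ ω, P (B ⁻¹' Set.Ico (B ω - 2 * max (B ω - A ω) 0) (B ω))
      ≤ ENNReal.ofReal CB * ENNReal.ofReal (2 * max (B ω - A ω) 0) := by
    intro ω
    have := hμB _ (measurableSet_Ico (a := B ω - 2 * max (B ω - A ω) 0) (b := B ω))
    simpa [Real.volume_Ico] using this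
  have m3 : ∀ ω, P (B ⁻¹' Set.Icc (B ω - 2 * max (B ω - A ω) 0) (B ω))
      ≤ ENNReal.ofReal CB * ENNReal.ofReal (2 * max (B ω - A ω) 0) := by
    intro ω
    have := hμB _ (measurableSet_Icc (a := B ω - 2 * max (B ω - A ω) 0) (b := B ω))
    simpa [Real.volume_Icc] using this
  have m4 : ∀ ω, P (B ⁻¹' Set.Icc (B ω) (B ω + 2 * max (A ω - B ω) 0))
      ≤ ENNReal.ofReal CB * ENNReal.ofReal (2 * max (A ω - B ω) 0) := by
    intro ω
    have := hμB _ (measurableSet_Icc (a := B ω) (b := B ω + 2 * max (A ω - B ω) 0))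
    simpa [Real.volume_Icc] using this
  -- the two basic lintegrals
  have hf1m : Measurable fun ω => ENNReal.ofReal (2 * max (A ω - B ω) 0) :=
    (((hA.sub hB).max measurable_const).const_mul 2).ennreal_ofReal
  have hf2m : Measurable fun ω => ENNReal.ofReal (2 * max (B ω - A ω) 0) :=
    (((hB.sub hA).max measurable_const).const_mul 2).ennreal_ofReal
  set X1 := ∫⁻ ω, ENNReal.ofReal (2 * max (A ω - B ω) 0) ∂P with hX1def
  set X2 := ∫⁻ ω, ENNReal.ofReal (2 * max (B ω - A ω) 0) ∂P with hX2def
  -- product measure bounds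
  have hQ1 : P.prod P UG1 ≤ ENNReal.ofReal CB * X1 := by
    rw [Measure.prod_apply hUG1m, ← lintegral_const_mul _ hf1m]
    refine lintegral_mono fun ω => ?_
    have hpre : Prod.mk ω ⁻¹' UG1 =
        B ⁻¹' Set.Ioc (B ω) (B ω + 2 * max (A ω - B ω) 0) := rfl
    rw [hpre]; exact m1 ω
  have hQ2 : P.prod P UG2 ≤ ENNReal.ofReal CB * X2 := by
    rw [Measure.prod_apply_symm hUG2m, ← lintegral_const_mul _ hf2m]
    refine lintegral_mono fun ω => ?_
    have hpre : (fun x => (x, ω)) ⁻¹' UG2 =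
        B ⁻¹' Set.Ico (B ω - 2 * max (B ω - A ω) 0) (B ω) := rfl
    rw [hpre]; exact m2 ω
  have hQ3 : P.prod P UG3 ≤ ENNReal.ofReal CB * X2 := by
    rw [Measure.prod_apply hUG3m, ← lintegral_const_mul _ hf2m]
    refine lintegral_mono fun ω => ?_
    have hpre : Prod.mk ω ⁻¹' UG3 =
        B ⁻¹' Set.Icc (B ω - 2 * max (B ω - A ω) 0) (B ω) := rfl
    rw [hpre]; exact m3 ω
  have hQ4 : P.prod P UG4 ≤ ENNReal.ofReal CB * X1 := by
    rw [Measure.prod_apply_symm hUG4m, ← lintegral_const_mul _ hf1m]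
    refine lintegral_mono fun ω => ?_
    have hpre : (fun x => (x, ω)) ⁻¹' UG4 =
        B ⁻¹' Set.Icc (B ω) (B ω + 2 * max (A ω - B ω) 0) := rfl
    rw [hpre]; exact m4 ω
  -- X1 + X2 = ofReal (2 * E|A-B|)
  have hXsum : X1 + X2 = ENNReal.ofReal (2 * ∫ ω, |A ω - B ω| ∂P) := by
    rw [hX1def, hX2def, ← lintegral_add_left hf1m]
    have heq : ∀ ω, ENNReal.ofReal (2 * max (A ω - B ω) 0)
        + ENNReal.ofReal (2 * max (B ω - A ω) 0) = ENNReal.ofReal (2 * |A ω - B ω|) := by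
      intro ω
      rw [← ENNReal.ofReal_add (by positivity) (by positivity)]
      congr 1
      rcases le_total (A ω - B ω) 0 with h | h
      · rw [max_eq_right h, max_eq_left (by linarith), abs_of_nonpos h]; ring
      · rw [max_eq_left h, max_eq_right (by linarith), abs_of_nonneg h]; ring
    rw [lintegral_congr heq]
    rw [← ofReal_integral_eq_lintegral_ofReal (hint.const_mul 2)
      (Filter.Eventually.of_forall fun ω => by positivity)]
    rw [integral_const_mul]
  -- measurability of the CDF composition
  have hFAmono : Monotone FA := fun s t hst =>
    ENNReal.toReal_mono (measure_ne_top _ _)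
      (measure_mono fun ω (h : A ω ≤ s) => h.trans hst)
  have hFBmono : Monotone FB := fun s t hst =>
    ENNReal.toReal_mono (measure_ne_top _ _)
      (measure_mono fun ω (h : B ω ≤ s) => h.trans hst)
  have hImeas : Measurable fun ω => |FA (A ω) - FB (B ω)| :=
    ((hFAmono.measurable.comp hA).sub (hFBmono.measurable.comp hB)).abs
  -- main lintegral bound
  have main : ∫⁻ ω, ENNReal.ofReal |FA (A ω) - FB (B ω)| ∂P
      ≤ ENNReal.ofReal CB * ENNReal.ofReal (4 * ∫ ω, |A ω - B ω| ∂P) := by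
    calc ∫⁻ ω, ENNReal.ofReal |FA (A ω) - FB (B ω)| ∂P
        ≤ ∫⁻ ω, (P (Prod.mk ω ⁻¹' UE1) + P (Prod.mk ω ⁻¹' UE2)) ∂P :=
          lintegral_mono key1
      _ = ∫⁻ ω, P (Prod.mk ω ⁻¹' UE1) ∂P + ∫⁻ ω, P (Prod.mk ω ⁻¹' UE2) ∂P :=
          lintegral_add_left (measurable_measure_prodMk_left hUE1m) _
      _ = P.prod P UE1 + P.prod P UE2 := by
          rw [Measure.prod_apply hUE1m, Measure.prod_apply hUE2m]
      _ ≤ (P.prod P UG1 + P.prod P UG2) + (P.prod P UG3 + P.prod P UG4) := by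
          gcongr
          · exact (measure_mono hsub1).trans (measure_union_le _ _)
          · exact (measure_mono hsub2).trans (measure_union_le _ _)
      _ ≤ (ENNReal.ofReal CB * X1 + ENNReal.ofReal CB * X2)
            + (ENNReal.ofReal CB * X2 + ENNReal.ofReal CB * X1) := by
          gcongr
      _ = ENNReal.ofReal CB * ((X1 + X2) + (X1 + X2)) := by ring
      _ = ENNReal.ofReal CB * ENNReal.ofReal (4 * ∫ ω, |A ω - B ω| ∂P) := by
          rw [hXsum, ← ENNReal.ofReal_add (by positivity) (by positivity)]
          congr 2
          ring
  -- conclude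
  have lhs_eq : ∫ ω, |FA (A ω) - FB (B ω)| ∂P
      = (∫⁻ ω, ENNReal.ofReal |FA (A ω) - FB (B ω)| ∂P).toReal :=
    integral_eq_lintegral_of_nonneg_ae
      (Filter.Eventually.of_forall fun ω => abs_nonneg _) hImeas.aestronglyMeasurable
  rw [lhs_eq]
  have hfin : ENNReal.ofReal CB * ENNReal.ofReal (4 * ∫ ω, |A ω - B ω| ∂P) ≠ ⊤ :=
    ENNReal.mul_ne_top ENNReal.ofReal_ne_top ENNReal.ofReal_ne_top
  have := ENNReal.toReal_mono hfin main
  rw [ENNReal.toReal_mul, ENNReal.toReal_ofReal hCB,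
    ENNReal.toReal_ofReal (by positivity)] at this
  linarith
end

section
/- Let $A$ and $B$ be real-valued random variables with cumulative distribution functions $F_A$ and $F_B$, and assume $B$ has a Lebesgue density bounded by $C_B$. Suppose moreover $|A - B| \leq M$ almost surely. Then for all $q \in (1, \infty)$, $\mathbb{E}[|F_A(A) - F_B(B)|^q] \leq 4^q C_B^q M^q$. -/
open MeasureTheory ProbabilityTheory

/-- If `B` admits a Lebesgue density bounded by `C_B` and `|A - B| ≤ M` almost
surely, then for all `q > 1`, `E|F_A(A) - F_B(B)|^q ≤ 4^q C_B^q M^q`. -/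
theorem cdf_difference_moment_bound
    {Ω : Type*} [MeasurableSpace Ω] (P : Measure Ω) [IsProbabilityMeasure P]
    (A B : Ω → ℝ) (hA : Measurable A) (hB : Measurable B)
    (CB M : ℝ) (fB : ℝ → ℝ)
    (hfB_nonneg : ∀ x, 0 ≤ fB x) (hfB_bdd : ∀ x, fB x ≤ CB)
    (hdens : P.map B = volume.withDensity (fun x => ENNReal.ofReal (fB x)))
    (hbound : ∀ᵐ ω ∂P, |A ω - B ω| ≤ M)
    (q : ℝ) (hq : 1 < q) :
    let FA : ℝ → ℝ := fun t => (P {ω | A ω ≤ t}).toReal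
    let FB : ℝ → ℝ := fun t => (P {ω | B ω ≤ t}).toReal
    ∫ ω, |FA (A ω) - FB (B ω)| ^ q ∂P ≤ 4 ^ q * CB ^ q * M ^ q := by
  intro FA FB
  have hq0 : (0:ℝ) ≤ q := le_of_lt (lt_trans one_pos hq)
  have hCB : 0 ≤ CB := le_trans (hfB_nonneg 0) (hfB_bdd 0)
  have hM : 0 ≤ M := by
    obtain ⟨ω, hω⟩ := hbound.exists
    exact le_trans (abs_nonneg _) hω
  -- measure of Iic via density
  have hμ : ∀ t, P {ω | B ω ≤ t} = ∫⁻ x in Set.Iic t, ENNReal.ofReal (fB x) := by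
    intro t
    have h1 : P {ω | B ω ≤ t} = P.map B (Set.Iic t) := by
      rw [Measure.map_apply hB measurableSet_Iic]; rfl
    rw [h1, hdens, withDensity_apply _ measurableSet_Iic]
  -- FB monotone
  have hFBmono : ∀ {t s : ℝ}, t ≤ s → FB t ≤ FB s := by
    intro t s hts
    apply ENNReal.toReal_mono (measure_ne_top _ _)
    exact measure_mono (fun ω h => le_trans h hts)
  -- FB Lipschitz (one direction suffices with monotonicity)
  have hLip : ∀ t s : ℝ, t ≤ s → FB s - FB t ≤ CB * (s - t) := by
    intro t s hts
    have hIoc : (∫⁻ x in Set.Ioc t s, ENNReal.ofReal (fB x))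
        ≤ ENNReal.ofReal (CB * (s - t)) := by
      calc (∫⁻ x in Set.Ioc t s, ENNReal.ofReal (fB x))
          ≤ ∫⁻ _ in Set.Ioc t s, ENNReal.ofReal CB := by
            exact lintegral_mono fun x => ENNReal.ofReal_le_ofReal (hfB_bdd x)
        _ = ENNReal.ofReal CB * volume (Set.Ioc t s) := by
            rw [setLIntegral_const]
        _ = ENNReal.ofReal (CB * (s - t)) := by
            rw [Real.volume_Ioc, ← ENNReal.ofReal_mul hCB]
    have hsplit : P {ω | B ω ≤ s}
        = P {ω | B ω ≤ t} + ∫⁻ x in Set.Ioc t s, ENNReal.ofReal (fB x) := by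
      rw [hμ, hμ, ← lintegral_union measurableSet_Ioc (Set.Iic_disjoint_Ioc le_rfl),
        Set.Iic_union_Ioc_eq_Iic hts]
    have hfin : (∫⁻ x in Set.Ioc t s, ENNReal.ofReal (fB x)) ≠ ⊤ :=
      ne_top_of_le_ne_top ENNReal.ofReal_ne_top hIoc
    have : FB s = FB t + (∫⁻ x in Set.Ioc t s, ENNReal.ofReal (fB x)).toReal := by
      simp only [FB, hsplit, ENNReal.toReal_add (measure_ne_top _ _) hfin]
    rw [this]
    have := ENNReal.toReal_mono ENNReal.ofReal_ne_top hIoc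
    rw [ENNReal.toReal_ofReal (by nlinarith)] at this
    linarith
  -- FA vs shifted FB
  have hAB : ∀ t : ℝ, FA t ≤ FB (t + M) := by
    intro t
    apply ENNReal.toReal_mono (measure_ne_top _ _)
    apply measure_mono_ae
    filter_upwards [hbound] with ω h hle
    have h2 := abs_le.1 h
    have h3 : A ω ≤ t := hle
    show B ω ≤ t + M
    linarith [h2.2]
  have hBA : ∀ t : ℝ, FB (t - M) ≤ FA t := by
    intro t
    apply ENNReal.toReal_mono (measure_ne_top _ _)
    apply measure_mono_ae
    filter_upwards [hbound] with ω h hle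
    have h2 := abs_le.1 h
    have h3 : B ω ≤ t - M := hle
    show A ω ≤ t
    linarith [h2.1]
  -- pointwise a.e. bound
  have hpt : ∀ᵐ ω ∂P, |FA (A ω) - FB (B ω)| ^ q ≤ (2 * CB * M) ^ q := by
    filter_upwards [hbound] with ω h
    have habs := abs_le.1 h
    have hup : FA (A ω) - FB (B ω) ≤ 2 * CB * M := by
      have h1 : FA (A ω) ≤ FB (A ω + M) := hAB _
      by_cases hc : B ω ≤ A ω + M
      · have h2 : FB (A ω + M) - FB (B ω) ≤ CB * (A ω + M - B ω) := by
          have := hLip (B ω) (A ω + M) hc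
          linarith
        nlinarith [habs.2]
      · have h2 : FB (A ω + M) ≤ FB (B ω) := hFBmono (le_of_lt (lt_of_not_ge hc))
        nlinarith
    have hlo : -(2 * CB * M) ≤ FA (A ω) - FB (B ω) := by
      have h1 : FB (A ω - M) ≤ FA (A ω) := hBA _
      have hc : A ω - M ≤ B ω := by linarith [habs.2]
      have h2 := hLip (A ω - M) (B ω) hc
      nlinarith [habs.1]
    have habs2 : |FA (A ω) - FB (B ω)| ≤ 2 * CB * M := abs_le.2 ⟨hlo, hup⟩
    exact Real.rpow_le_rpow (abs_nonneg _) habs2 hq0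
  have hrhs : (2 * CB * M) ^ q ≤ 4 ^ q * CB ^ q * M ^ q := by
    have h1 : (2 * CB * M) ^ q = 2 ^ q * CB ^ q * M ^ q := by
      rw [Real.mul_rpow (by positivity) hM, Real.mul_rpow (by norm_num) hCB]
    have h2 : (2:ℝ) ^ q ≤ 4 ^ q := Real.rpow_le_rpow (by norm_num) (by norm_num) hq0
    have h3 : (0:ℝ) ≤ CB ^ q * M ^ q :=
      mul_nonneg (Real.rpow_nonneg hCB q) (Real.rpow_nonneg hM q)
    calc (2 * CB * M) ^ q = 2 ^ q * (CB ^ q * M ^ q) := by rw [h1]; ring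
      _ ≤ 4 ^ q * (CB ^ q * M ^ q) := mul_le_mul_of_nonneg_right h2 h3
      _ = 4 ^ q * CB ^ q * M ^ q := by ring
  have hrhs0 : (0:ℝ) ≤ 4 ^ q * CB ^ q * M ^ q := by positivity
  by_cases hint : Integrable (fun ω => |FA (A ω) - FB (B ω)| ^ q) P
  · calc ∫ ω, |FA (A ω) - FB (B ω)| ^ q ∂P
        ≤ ∫ _, (2 * CB * M) ^ q ∂P := integral_mono_ae hint (integrable_const _) hpt
      _ = (2 * CB * M) ^ q := by simp
      _ ≤ 4 ^ q * CB ^ q * M ^ q := hrhs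
  · rw [integral_undef hint]; exact hrhs0
end

section
/- Let $\mu$ and $\nu$ be two probability measures on $\mathbb{R}$ with finite first moments, and suppose $\mu$ admits a density with respect to the Lebesgue measure bounded by $C_\mu$. Then the Kolmogorov-Smirnov distance satisfies $\mathrm{KS}(\mu, \nu) \leq 2\sqrt{C_\mu \mathsf{W}_1(\mu, \nu)}$. -/
/-!
Since `μ` has density at most `C`, its CDF `F` grows at rate at most `C`, while the CDF `G`
of `ν` is nondecreasing. If `δ = F t - G t > 0`, then `F - G ≥ δ - C (t - s)` for
`s ∈ [t - δ / C, t]`, so the tent under this line, of area `δ² / (2C)`, lies below `|F - G|`,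
whence `δ² ≤ 2 C W₁(μ, ν)`; the case `G t > F t` is the mirror image under `x ↦ -x`.
`|F - G|` is integrable (so the integral is not the junk value `0`) because each CDF differs
from the Heaviside function by at most `t ↦ μ {x | |t| ≤ |x|}`, whose integral is `2 ∫ |x| dμ`.
-/

open MeasureTheory ProbabilityTheory Set

lemma withDensity_ofReal_apply_le {α : Type*} [MeasurableSpace α] (ν : Measure α) {f : α → ℝ}
    {C : ℝ} (hf : ∀ x, f x ≤ C) (s : Set α) :
    ν.withDensity (fun x => ENNReal.ofReal (f x)) s ≤ ENNReal.ofReal C * ν s := by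
  calc ν.withDensity (fun x => ENNReal.ofReal (f x)) s
      ≤ ν.withDensity (fun _ => ENNReal.ofReal C) s :=
        withDensity_mono (ae_of_all _ fun x => ENNReal.ofReal_le_ofReal (hf x)) s
    _ = ENNReal.ofReal C * ν s := by rw [withDensity_const, Measure.smul_apply, smul_eq_mul]

lemma pos_of_isProbabilityMeasure_le_ofReal_mul {α : Type*} [MeasurableSpace α]
    {μ ν : Measure α} [IsProbabilityMeasure μ] {C : ℝ} (h : ∀ s, μ s ≤ ENNReal.ofReal C * ν s) :
    0 < C := by
  by_contra! hC
  simpa [ENNReal.ofReal_of_nonpos hC] using h univ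

lemma cdf_sub_cdf_le_mul (μ : Measure ℝ) [IsProbabilityMeasure μ] {C : ℝ} (hC : 0 ≤ C)
    (h : ∀ s, μ s ≤ ENNReal.ofReal C * volume s) {s u : ℝ} (hsu : s ≤ u) :
    cdf μ u - cdf μ s ≤ C * (u - s) := by
  have hIoc := h (Ioc s u)
  rw [← measure_cdf μ, StieltjesFunction.measure_Ioc, Real.volume_Ioc,
    ← ENNReal.ofReal_mul hC, ENNReal.ofReal_le_ofReal_iff (mul_nonneg hC (sub_nonneg.2 hsu))]
    at hIoc
  exact hIoc

section Tails

variable (μ : Measure ℝ)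

lemma lintegral_measure_abs_le_abs [SFinite μ] :
    ∫⁻ t, μ {x | |t| ≤ |x|} = ∫⁻ x, ENNReal.ofReal (2 * |x|) ∂μ := by
  have hS : MeasurableSet {p : ℝ × ℝ | |p.1| ≤ |p.2|} :=
    measurableSet_le measurable_fst.abs measurable_snd.abs
  calc ∫⁻ t, μ {x | |t| ≤ |x|} = (volume.prod μ) {p : ℝ × ℝ | |p.1| ≤ |p.2|} :=
        (Measure.prod_apply hS).symm
    _ = ∫⁻ x, volume (Icc (-|x|) |x|) ∂μ := by
        rw [Measure.prod_apply_symm hS]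
        congr! 3 with x
        ext t
        simp [abs_le]
    _ = ∫⁻ x, ENNReal.ofReal (2 * |x|) ∂μ := by
        simp only [Real.volume_Icc, sub_neg_eq_add, two_mul]

lemma integrable_measureReal_abs_le_abs [IsFiniteMeasure μ] (hμ : Integrable (fun x => x) μ) :
    Integrable (fun t => μ.real {x | |t| ≤ |x|}) := by
  refine ⟨(measurable_measure_prodMk_left (measurableSet_le measurable_fst.abs
    measurable_snd.abs)).ennreal_toReal.aestronglyMeasurable, ?_⟩
  simp only [HasFiniteIntegral, measureReal_def, Real.enorm_eq_ofReal ENNReal.toReal_nonneg,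
    ENNReal.ofReal_toReal (measure_ne_top μ _), lintegral_measure_abs_le_abs]
  simp_rw [ENNReal.ofReal_mul zero_le_two]
  rw [lintegral_const_mul' _ _ ENNReal.ofReal_ne_top]
  refine ENNReal.mul_lt_top ENNReal.ofReal_lt_top ?_
  simpa [HasFiniteIntegral, Real.enorm_eq_ofReal_abs] using hμ.hasFiniteIntegral

-- `(Ici 0).indicator 1` is the CDF of the Dirac mass at `0`.
lemma abs_cdf_sub_indicator_le [IsProbabilityMeasure μ] (t : ℝ) :
    |cdf μ t - (Ici 0).indicator 1 t| ≤ μ.real {x | |t| ≤ |x|} := by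
  rw [cdf_eq_real]
  rcases lt_or_ge t 0 with ht | ht
  · rw [indicator_of_notMem (notMem_Ici.2 ht), sub_zero, abs_of_nonneg measureReal_nonneg]
    refine measureReal_mono fun x (hx : x ≤ t) => ?_
    show |t| ≤ |x|
    rw [abs_of_neg ht, abs_of_neg (hx.trans_lt ht)]
    linarith
  · rw [indicator_of_mem (mem_Ici.2 ht), Pi.one_apply, abs_sub_comm,
      ← probReal_compl_eq_one_sub measurableSet_Iic, compl_Iic, abs_of_nonneg measureReal_nonneg]
    refine measureReal_mono fun x (hx : t < x) => ?_
    show |t| ≤ |x|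
    rw [abs_of_nonneg ht, abs_of_pos (ht.trans_lt hx)]
    exact hx.le

end Tails

lemma integrable_abs_cdf_sub_cdf (μ ν : Measure ℝ) [IsProbabilityMeasure μ]
    [IsProbabilityMeasure ν]
    (hμ : Integrable (fun x => x) μ) (hν : Integrable (fun x => x) ν) :
    Integrable (fun t => |cdf μ t - cdf ν t|) := by
  refine ((integrable_measureReal_abs_le_abs μ hμ).add
    (integrable_measureReal_abs_le_abs ν hν)).mono'
    ((monotone_cdf μ).measurable.sub (monotone_cdf ν).measurable).abs.aestronglyMeasurable
    (ae_of_all _ fun t => ?_)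
  rw [Real.norm_eq_abs, abs_abs]
  calc |cdf μ t - cdf ν t|
      ≤ |cdf μ t - (Ici 0).indicator 1 t| + |(Ici 0).indicator 1 t - cdf ν t| := abs_sub_le _ _ _
    _ ≤ _ := by
        rw [abs_sub_comm _ (cdf ν t)]
        exact add_le_add (abs_cdf_sub_indicator_le μ t) (abs_cdf_sub_indicator_le ν t)

lemma integral_Ioc_tent {C : ℝ} (hC : 0 < C) {δ : ℝ} (hδ : 0 ≤ δ) (t : ℝ) :
    ∫ s in Ioc (t - δ / C) t, (δ - C * (t - s)) = δ ^ 2 / (2 * C) := by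
  rw [← intervalIntegral.integral_of_le (by linarith [div_nonneg hδ hC.le]),
    intervalIntegral.integral_comp_sub_left (fun r => δ - C * r),
    intervalIntegral.integral_sub intervalIntegrable_const
      (intervalIntegral.intervalIntegrable_id.const_mul C), intervalIntegral.integral_const_mul]
  simp only [sub_sub_cancel, sub_self, intervalIntegral.integral_const, integral_id, smul_eq_mul]
  field_simp
  ring

section Tent

variable {F G H : ℝ → ℝ} {C : ℝ}

lemma sq_le_two_mul_integral_of_tent_le (hH : Integrable H) (hH0 : 0 ≤ H) (hC : 0 < C)
    {δ t : ℝ} (hδ : 0 ≤ δ) (htent : ∀ s ∈ Ioc (t - δ / C) t, δ - C * (t - s) ≤ H s) :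
    δ ^ 2 ≤ 2 * C * ∫ x, H x := by
  have h : δ ^ 2 / (2 * C) ≤ ∫ x, H x :=
    calc δ ^ 2 / (2 * C) = ∫ s in Ioc (t - δ / C) t, (δ - C * (t - s)) :=
          (integral_Ioc_tent hC hδ t).symm
      _ ≤ ∫ s in Ioc (t - δ / C) t, H s :=
          setIntegral_mono_on (Continuous.integrableOn_Ioc (by fun_prop)) hH.integrableOn
            measurableSet_Ioc htent
      _ ≤ ∫ x, H x := setIntegral_le_integral hH (ae_of_all _ hH0)
  rwa [div_le_iff₀ (by positivity), mul_comm] at h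

lemma sub_sq_le_two_mul_integral_abs_sub_of_le (hF : ∀ ⦃s u⦄, s ≤ u → F u - F s ≤ C * (u - s))
    (hG : Monotone G) (hint : Integrable fun x => |F x - G x|) (hC : 0 < C) {t : ℝ}
    (hle : G t ≤ F t) :
    (F t - G t) ^ 2 ≤ 2 * C * ∫ x, |F x - G x| :=
  sq_le_two_mul_integral_of_tent_le hint (fun _ => abs_nonneg _) hC (t := t) (sub_nonneg.2 hle)
    fun s hs => by linarith [hF hs.2, hG hs.2, le_abs_self (F s - G s)]

lemma abs_sub_le_sqrt_two_mul_integral_abs_sub (hF : ∀ ⦃s u⦄, s ≤ u → F u - F s ≤ C * (u - s))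
    (hG : Monotone G) (hint : Integrable fun x => |F x - G x|) (hC : 0 < C) (t : ℝ) :
    |F t - G t| ≤ √(2 * C * ∫ x, |F x - G x|) := by
  refine Real.abs_le_sqrt ?_
  rcases le_total (G t) (F t) with hle | hle
  · exact sub_sq_le_two_mul_integral_abs_sub_of_le hF hG hint hC hle
  · -- `x ↦ -F (-x)` keeps the rate bound and `x ↦ -G (-x)` is monotone, but the sign flips
    have hreflect := sub_sq_le_two_mul_integral_abs_sub_of_le (F := fun x => -F (-x))
      (G := fun x => -G (-x)) (t := -t) (fun s u hsu => by linarith [hF (neg_le_neg hsu)])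
      (fun s u hsu => neg_le_neg (hG (neg_le_neg hsu)))
      (by simpa only [neg_sub_neg, abs_sub_comm (G _)] using hint.comp_neg) hC (by simpa using hle)
    simp only [neg_neg, neg_sub_neg, abs_sub_comm (G _)] at hreflect
    rwa [integral_neg_eq_self (fun x => |F x - G x|), ← neg_sub, neg_sq] at hreflect

end Tent

theorem ks_le_sqrt_wasserstein1_general
    (μ ν : Measure ℝ) [IsProbabilityMeasure μ] [IsProbabilityMeasure ν]
    (hμ_mom : Integrable (fun x => x) μ) (hν_mom : Integrable (fun x => x) ν)
    (Cμ : ℝ) (fμ : ℝ → ℝ)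
    (hf_bdd : ∀ x, fμ x ≤ Cμ)
    (hdens : μ = volume.withDensity (fun x => ENNReal.ofReal (fμ x))) :
    let Fμ : ℝ → ℝ := fun t => (μ (Set.Iic t)).toReal
    let Fν : ℝ → ℝ := fun t => (ν (Set.Iic t)).toReal
    ∀ t : ℝ, |Fμ t - Fν t| ≤
      2 * Real.sqrt (Cμ * ∫ x, |Fμ x - Fν x| ∂volume) := by
  intro Fμ Fν t
  have hμC : ∀ s, μ s ≤ ENNReal.ofReal Cμ * volume s := by
    rw [hdens]
    exact withDensity_ofReal_apply_le volume hf_bdd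
  have hC : 0 < Cμ := pos_of_isProbabilityMeasure_le_ofReal_mul hμC
  have hFμ : Fμ = cdf μ := funext fun x => (cdf_eq_real μ x).symm
  have hFν : Fν = cdf ν := funext fun x => (cdf_eq_real ν x).symm
  rw [hFμ, hFν]
  calc |cdf μ t - cdf ν t| ≤ √(2 * Cμ * ∫ x, |cdf μ x - cdf ν x|) :=
        abs_sub_le_sqrt_two_mul_integral_abs_sub (fun _ _ => cdf_sub_cdf_le_mul μ hC.le hμC)
          (monotone_cdf ν) (integrable_abs_cdf_sub_cdf μ ν hμ_mom hν_mom) hC t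
    _ ≤ √(2 ^ 2 * (Cμ * ∫ x, |cdf μ x - cdf ν x|)) := by
        rw [← mul_assoc]
        gcongr
        norm_num
    _ = 2 * √(Cμ * ∫ x, |cdf μ x - cdf ν x|) := by
        rw [Real.sqrt_mul (sq_nonneg 2), Real.sqrt_sq zero_le_two]

/-- If `μ` has a Lebesgue density bounded by `C_μ`, then the Kolmogorov–Smirnov
distance between `μ` and `ν` is bounded by `2 √(C_μ W₁(μ,ν))`, where
`W₁(μ,ν) = ∫ |F_μ - F_ν|` is the Wasserstein-1 distance on the real line. -/
theorem ks_le_sqrt_wasserstein1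
    (μ ν : Measure ℝ) [IsProbabilityMeasure μ] [IsProbabilityMeasure ν]
    (hμ_mom : Integrable (fun x => x) μ) (hν_mom : Integrable (fun x => x) ν)
    (Cμ : ℝ) (fμ : ℝ → ℝ)
    (hf_nonneg : ∀ x, 0 ≤ fμ x) (hf_bdd : ∀ x, fμ x ≤ Cμ)
    (hdens : μ = volume.withDensity (fun x => ENNReal.ofReal (fμ x))) :
    let Fμ : ℝ → ℝ := fun t => (μ (Set.Iic t)).toReal
    let Fν : ℝ → ℝ := fun t => (ν (Set.Iic t)).toReal
    ∀ t : ℝ, |Fμ t - Fν t| ≤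
      2 * Real.sqrt (Cμ * ∫ x, |Fμ x - Fν x| ∂volume) :=
  ks_le_sqrt_wasserstein1_general μ ν hμ_mom hν_mom Cμ fμ hf_bdd hdens
end

section
/- Let $(\Omega, \mathcal{A})$ be a measurable space, $M \geq 1$, and $A_0, \ldots, A_M$ pairwise disjoint measurable events. Let $\mathbf{Q}_0, \ldots, \mathbf{Q}_M$ be probability measures on $(\Omega, \mathcal{A})$ such that $\frac{1}{M}\sum_{j=1}^M \mathrm{KL}(\mathbf{Q}_j, \mathbf{Q}_0) \leq \kappa < \infty$. Then $\max_{j=0,\ldots,M} \mathbf{Q}_j(A_j^c) \geq \frac{1}{12}\min(1, M e^{-3\kappa})$. -/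
/-!
If each `Q j` gives mass at least `1 - b` to its own event `A j`, then the events `A j`,
`j ≠ 0`, all lie in `(A 0)ᶜ`, so together they carry `Q 0`-mass at most `b`. Testing the
log-likelihood ratio against `log a · 1_B` (the tangent-line bound `log x ≥ log a + 1 - a / x`)
gives `KL(Q, P) ≥ Q(B) log a - (a - 1) P(B)`; with `a = M / b` and summed over `j ≠ 0`, the
average divergence exceeds `(1 - b) log (M / b) - 1`, which is larger than `κ` when
`b = min(1, M e^{-3κ}) / 12`.
-/

open MeasureTheory
open scoped ENNReal Classical

/-- Kullback–Leibler divergence `KL(Q, P)`, valued in `ℝ≥0∞`: equals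
`∫ log (dQ/dP) dQ` when `Q ≪ P` and the integrand is `Q`-integrable, `∞` otherwise. -/
noncomputable def klDivergence {Ω : Type*} [MeasurableSpace Ω]
    (Q P : Measure Ω) : ℝ≥0∞ :=
  if Q ≪ P ∧ Integrable (fun ω => Real.log (Q.rnDeriv P ω).toReal) Q
  then ENNReal.ofReal (∫ ω, Real.log ((Q.rnDeriv P ω).toReal) ∂Q)
  else ∞

open Real Finset

section LogLikelihoodRatio

variable {Ω : Type*} [MeasurableSpace Ω] {Q P : Measure Ω} {B : Set Ω}

lemma setLIntegral_inv_rnDeriv_le [Q.HaveLebesgueDecomposition P] (hQP : Q ≪ P)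
    (hB : MeasurableSet B) :
    ∫⁻ ω in B, (Q.rnDeriv P ω)⁻¹ ∂Q ≤ P B := by
  rw [← setLIntegral_rnDeriv_mul hQP (f := fun ω => (Q.rnDeriv P ω)⁻¹)
    (Measure.measurable_rnDeriv Q P).inv.aemeasurable hB]
  calc ∫⁻ ω in B, Q.rnDeriv P ω * (Q.rnDeriv P ω)⁻¹ ∂P
      ≤ ∫⁻ _ in B, 1 ∂P := lintegral_mono fun _ => ENNReal.mul_inv_le_one _
    _ = P B := setLIntegral_one B

variable [IsFiniteMeasure P] [Q.HaveLebesgueDecomposition P]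

lemma integrableOn_inv_rnDeriv_toReal (hQP : Q ≪ P) (hB : MeasurableSet B) :
    IntegrableOn (fun ω => (Q.rnDeriv P ω).toReal⁻¹) B Q := by
  simp_rw [← ENNReal.toReal_inv]
  exact integrable_toReal_of_lintegral_ne_top (Measure.measurable_rnDeriv Q P).inv.aemeasurable
    ((setLIntegral_inv_rnDeriv_le hQP hB).trans_lt (measure_lt_top P B)).ne

lemma setIntegral_inv_rnDeriv_toReal_le (hQP : Q ≪ P) (hB : MeasurableSet B) :
    ∫ ω in B, (Q.rnDeriv P ω).toReal⁻¹ ∂Q ≤ P.real B := by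
  have hmeas : AEMeasurable (fun ω => (Q.rnDeriv P ω)⁻¹) (Q.restrict B) :=
    (Measure.measurable_rnDeriv Q P).inv.aemeasurable
  have hle := setLIntegral_inv_rnDeriv_le hQP hB
  simp_rw [← ENNReal.toReal_inv]
  rw [integral_toReal hmeas (ae_lt_top' hmeas (hle.trans_lt (measure_lt_top P B)).ne)]
  exact ENNReal.toReal_mono (measure_ne_top P B) hle

lemma setIntegral_log_rnDeriv_ge [IsFiniteMeasure Q] (hQP : Q ≪ P)
    (hint : Integrable (fun ω => log (Q.rnDeriv P ω).toReal) Q) (hB : MeasurableSet B)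
    {a : ℝ} (ha : 0 < a) :
    Q.real B * (log a + 1) - a * P.real B ≤ ∫ ω in B, log (Q.rnDeriv P ω).toReal ∂Q := by
  have hpos : ∀ᵐ ω ∂Q, 0 < (Q.rnDeriv P ω).toReal := by
    filter_upwards [Measure.rnDeriv_pos hQP, hQP.ae_le (Measure.rnDeriv_lt_top Q P)]
      with ω h0 htop
    exact ENNReal.toReal_pos h0.ne' htop.ne
  have htangent {x : ℝ} (hx : 0 < x) : log a + 1 - a * x⁻¹ ≤ log x := by
    have h := one_sub_inv_le_log_of_pos (div_pos hx ha)
    rw [inv_div, log_div hx.ne' ha.ne', div_eq_mul_inv] at h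
    linarith
  have hinv := integrableOn_inv_rnDeriv_toReal hQP hB
  calc Q.real B * (log a + 1) - a * P.real B
      ≤ Q.real B * (log a + 1) - a * ∫ ω in B, (Q.rnDeriv P ω).toReal⁻¹ ∂Q := by
        gcongr
        exact setIntegral_inv_rnDeriv_toReal_le hQP hB
    _ = ∫ ω in B, (log a + 1 - a * (Q.rnDeriv P ω).toReal⁻¹) ∂Q := by
        rw [integral_sub (integrable_const _) (hinv.const_mul a), setIntegral_const,
          integral_const_mul, smul_eq_mul, mul_comm]
    _ ≤ ∫ ω in B, log (Q.rnDeriv P ω).toReal ∂Q :=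
        integral_mono_ae ((integrable_const _).sub (hinv.const_mul a)) hint.integrableOn
          (ae_restrict_of_ae (hpos.mono fun _ => htangent))

end LogLikelihoodRatio

section KLDivergence

variable {Ω : Type*} [MeasurableSpace Ω] {Q P : Measure Ω} [IsProbabilityMeasure Q]
  [IsProbabilityMeasure P] {B : Set Ω}

lemma integral_log_rnDeriv_ge (hQP : Q ≪ P)
    (hint : Integrable (fun ω => log (Q.rnDeriv P ω).toReal) Q) (hB : MeasurableSet B)
    {a : ℝ} (ha : 0 < a) :
    Q.real B * log a - (a - 1) * P.real B ≤ ∫ ω, log (Q.rnDeriv P ω).toReal ∂Q := by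
  have hin := setIntegral_log_rnDeriv_ge hQP hint hB ha
  have hout := setIntegral_log_rnDeriv_ge hQP hint hB.compl one_pos
  rw [probReal_compl_eq_one_sub hB, probReal_compl_eq_one_sub hB, log_one] at hout
  rw [← integral_add_compl hB hint]
  linarith

lemma ofReal_mul_log_sub_le_klDivergence (hB : MeasurableSet B) {a : ℝ} (ha : 0 < a) :
    ENNReal.ofReal (Q.real B * log a - (a - 1) * P.real B) ≤ klDivergence Q P := by
  unfold klDivergence
  split_ifs with h
  · exact ENNReal.ofReal_le_ofReal (integral_log_rnDeriv_ge h.1 h.2 hB ha)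
  · exact le_top

end KLDivergence

lemma ofReal_le_avg_klDivergence {Ω : Type*} [MeasurableSpace Ω] {M : ℕ} (hM : 1 ≤ M)
    {A : Fin (M + 1) → Set Ω} (hA_meas : ∀ j, MeasurableSet (A j))
    (hA_disj : Pairwise (Function.onFun Disjoint A))
    {Q : Fin (M + 1) → Measure Ω} [∀ j, IsProbabilityMeasure (Q j)]
    {b : ℝ} (hb : 0 < b) (hb1 : b ≤ 1) (hQA : ∀ j, (Q j).real (A j)ᶜ ≤ b) :
    ENNReal.ofReal ((1 - b) * log (M / b) - 1) ≤
      (1 / (M : ℝ≥0∞)) * ∑ j ∈ univ.filter (fun j => j ≠ 0), klDivergence (Q j) (Q 0) := by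
  set J := univ.filter (fun j : Fin (M + 1) => j ≠ 0)
  set a : ℝ := M / b
  have hMb : b * a = M := mul_div_cancel₀ _ hb.ne'
  have ha : 1 ≤ a := (le_div_iff₀ hb).2 (by rw [one_mul]; exact hb1.trans (by exact_mod_cast hM))
  have hJ : #J = M := by simp [J, filter_ne']
  have hq (j : Fin (M + 1)) : 1 - b ≤ (Q j).real (A j) := by
    linarith [hQA j, probReal_compl_eq_one_sub (μ := Q j) (hA_meas j)]
  have hS : ∑ j ∈ J, (Q 0).real (A j) ≤ b := calc
    ∑ j ∈ J, (Q 0).real (A j) = (Q 0).real (⋃ j ∈ J, A j) :=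
      (measureReal_biUnion_finset (fun i _ j _ hij => hA_disj hij) fun j _ => hA_meas j).symm
    _ ≤ (Q 0).real (A 0)ᶜ := measureReal_mono <| Set.iUnion₂_subset fun j hj =>
      (hA_disj (mem_filter.1 hj).2).subset_compl_right
    _ ≤ b := hQA 0
  have hsum : ENNReal.ofReal (M * ((1 - b) * log a - 1)) ≤ ∑ j ∈ J, klDivergence (Q j) (Q 0) :=
    calc ENNReal.ofReal (M * ((1 - b) * log a - 1))
      _ ≤ ENNReal.ofReal (∑ j ∈ J, ((1 - b) * log a - (a - 1) * (Q 0).real (A j))) := by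
        refine ENNReal.ofReal_le_ofReal ?_
        rw [sum_sub_distrib, sum_const, hJ, ← mul_sum, nsmul_eq_mul]
        nlinarith [sum_nonneg fun j (_ : j ∈ J) => measureReal_nonneg (μ := Q 0) (s := A j)]
      _ ≤ ∑ j ∈ J, ENNReal.ofReal ((1 - b) * log a - (a - 1) * (Q 0).real (A j)) :=
        le_sum_of_subadditive _ ENNReal.ofReal_zero.le (fun _ _ => ENNReal.ofReal_add_le) _ _
      _ ≤ ∑ j ∈ J, klDivergence (Q j) (Q 0) := sum_le_sum fun j _ => by
        refine le_trans (ENNReal.ofReal_le_ofReal ?_)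
          (ofReal_mul_log_sub_le_klDivergence (hA_meas j) (a := a) (by positivity))
        exact sub_le_sub_right (mul_le_mul_of_nonneg_right (hq j) (log_nonneg ha)) _
  rw [ENNReal.ofReal_mul (Nat.cast_nonneg M), ENNReal.ofReal_natCast] at hsum
  calc ENNReal.ofReal ((1 - b) * log (M / b) - 1)
      = (1 / (M : ℝ≥0∞)) * (M * ENNReal.ofReal ((1 - b) * log a - 1)) := by
        rw [← mul_assoc, one_div, ENNReal.inv_mul_cancel (by exact_mod_cast (by omega : M ≠ 0))
          (ENNReal.natCast_ne_top M), one_mul]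
    _ ≤ _ := by gcongr

lemma max_lt_mul_log_div_sub_one {M κ b : ℝ} (hM : 1 ≤ M)
    (hb : b = 1 / 12 * min 1 (M * exp (-3 * κ))) :
    max κ 0 < (1 - b) * log (M / b) - 1 := by
  have hM0 : 0 < M := by linarith
  have hlog12 : 12 / 11 < log 12 := by
    rw [lt_log_iff_exp_lt (by norm_num)]
    calc exp (12 / 11) < exp 1 ^ 2 := by rw [exp_one_pow]; exact exp_lt_exp.2 (by norm_num)
      _ < 12 := by nlinarith [exp_one_lt_d9, exp_pos 1]
  have hlogM : 0 ≤ log M := log_nonneg hM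
  have hb0 : 0 < b := hb ▸ mul_pos (by norm_num) (lt_min one_pos (by positivity))
  have hb12 : b ≤ 1 / 12 := hb ▸ mul_le_of_le_one_right (by norm_num) (min_le_left _ _)
  have hcoef : 11 / 12 * log (M / b) ≤ (1 - b) * log (M / b) :=
    mul_le_mul_of_nonneg_right (by linarith) (log_nonneg ((le_div_iff₀ hb0).2 (by linarith)))
  rcases le_total 1 (M * exp (-3 * κ)) with h | h
  · have hκ : κ ≤ log M / 3 := by
      have := log_nonneg h
      rw [log_mul hM0.ne' (exp_pos _).ne', log_exp] at this
      linarith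
    have hlog : log (M / b) = log 12 + log M := by
      rw [hb, min_eq_left h, ← log_mul (by norm_num) hM0.ne']
      congr 1
      field_simp
    rw [max_lt_iff]
    constructor <;> linarith
  · have hκ : log M / 3 ≤ κ := by
      have := log_nonpos (by positivity) h
      rw [log_mul hM0.ne' (exp_pos _).ne', log_exp] at this
      linarith
    have hlog : log (M / b) = log 12 + 3 * κ := by
      rw [hb, min_eq_right h, ← log_exp (3 * κ), ← log_mul (by norm_num) (exp_pos _).ne']
      congr 1
      rw [neg_mul, exp_neg]
      field_simp
    rw [max_eq_left (by linarith)]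
    linarith

/-- Multiple-hypothesis lower bound: if `A_0, …, A_M` are pairwise disjoint events and
`(1/M) ∑_{j=1}^M KL(Q_j, Q_0) ≤ κ`, then `max_j Q_j(A_jᶜ) ≥ (1/12) min(1, M e^{-3κ})`. -/
theorem multiple_hypothesis_lower_bound
    {Ω : Type*} [MeasurableSpace Ω] (M : ℕ) (hM : 1 ≤ M)
    (A : Fin (M + 1) → Set Ω) (hA_meas : ∀ j, MeasurableSet (A j))
    (hA_disj : Pairwise (Function.onFun Disjoint A))
    (Q : Fin (M + 1) → Measure Ω) (hQ : ∀ j, IsProbabilityMeasure (Q j))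
    (κ : ℝ)
    (hKL : (1 / (M : ℝ≥0∞)) * ∑ j ∈ Finset.univ.filter (fun j => j ≠ 0),
        klDivergence (Q j) (Q 0) ≤ ENNReal.ofReal κ) :
    ∃ j, ENNReal.ofReal ((1 / 12) * min 1 ((M : ℝ) * Real.exp (-3 * κ))) ≤
      Q j (A j)ᶜ := by
  by_contra! hsmall
  set b := 1 / 12 * min 1 ((M : ℝ) * exp (-3 * κ)) with hb
  have hM' : (1 : ℝ) ≤ M := by exact_mod_cast hM
  have hb0 : 0 < b := mul_pos (by norm_num) (lt_min one_pos (by positivity))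
  have hb1 : b ≤ 1 := mul_le_one₀ (by norm_num) (by positivity) (min_le_left _ _)
  have hQA (j : Fin (M + 1)) : (Q j).real (A j)ᶜ ≤ b :=
    ENNReal.toReal_le_of_le_ofReal hb0.le (hsmall j).le
  have hKL' := (ofReal_le_avg_klDivergence hM hA_meas hA_disj hb0 hb1 hQA).trans hKL
  obtain ⟨hκ, h0⟩ := max_lt_iff.1 (max_lt_mul_log_div_sub_one hM' hb)
  rcases ENNReal.ofReal_le_ofReal_iff'.1 hKL' with h | h <;> linarith
end

section
/- Let $\mu_1, \ldots, \mu_K$ be non-atomic probability measures on $\mathbb{R}$ with finite $q$-th moments for some $q \in [1,\infty)$, let $\boldsymbol{w} \in \Delta^{K-1}$, and define $\nu^*$ via its quantile function $F^{-1}_{\nu^*}(t) \in \arg\min_{y \in \mathbb{R}} \sum_{s=1}^K w_s |F^{-1}_{\mu_s}(t) - y|^q$ for $t \in (0,1)$ (taking a measurable monotone selection). Then $\nu^*$ is a minimizer of $\nu \mapsto \sum_{s=1}^K w_s \mathsf{W}_q^q(\mu_s, \nu)$ over $\mathcal{P}_q(\mathbb{R})$, and $\nu^* \in \mathcal{P}_q(\mathbb{R})$.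 -/
/-!
For `t ∈ (0,1)`, minimality of `Q t` gives `∑ w_s |F⁻¹_{μ_s}(t) - Q t|^q ≤ ∑ w_s |F⁻¹_{μ_s}(t) - y|^q`
for every `y`; choosing `y = F⁻¹_ν(t)` and integrating over `(0,1)` gives the minimality of `ν*`.
All integrals involved are finite because `F⁻¹_μ` pushes Lebesgue measure on `(0,1)` forward to `μ`,
so `∫₀¹ |F⁻¹_μ|^q = ∫ |x|^q dμ`, and because `y = 0` bounds `|Q t|^q` by a combination of the
`|F⁻¹_{μ_s}(t)|^q`.
-/

open MeasureTheory

/-- The quantile function `F⁻¹_μ(t) = inf {x : t ≤ F_μ(x)}` of a measure on `ℝ`. -/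
noncomputable def quantileFn (μ : Measure ℝ) (t : ℝ) : ℝ :=
  sInf {x : ℝ | t ≤ (μ (Set.Iic x)).toReal}

open ProbabilityTheory Set Filter Topology

theorem volume_Iic_inter_Ioo_zero_one {c : ℝ} (hc : c ≤ 1) :
    volume (Iic c ∩ Ioo (0 : ℝ) 1) = ENNReal.ofReal c := by
  rw [← Measure.restrict_apply' measurableSet_Ioo, restrict_Ioo_eq_restrict_Ioc,
    Measure.restrict_apply' measurableSet_Ioc, Iic_inter_Ioc_of_le hc, Real.volume_Ioc, sub_zero]

theorem integrable_rpow_abs_map_iff {α : Type*} [MeasurableSpace α] {ν : Measure α} {f : α → ℝ}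
    {q : ℝ} (hf : AEMeasurable f ν) :
    Integrable (fun x => |x| ^ q) (ν.map f) ↔ Integrable (fun t => |f t| ^ q) ν :=
  integrable_map_measure (Measurable.aestronglyMeasurable (by fun_prop)) hf

section Quantile

variable (μ : Measure ℝ)

theorem bddBelow_setOf_le_cdf {t : ℝ} (ht : 0 < t) : BddBelow {x : ℝ | t ≤ cdf μ x} := by
  obtain ⟨x₀, hx₀⟩ := eventually_atBot.mp ((tendsto_cdf_atBot μ).eventually_lt_const ht)
  exact ⟨x₀, fun x hx => le_of_not_ge fun hxx₀ => (hx₀ x hxx₀).not_ge hx⟩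

theorem nonempty_setOf_le_cdf {t : ℝ} (ht : t < 1) : {x : ℝ | t ≤ cdf μ x}.Nonempty := by
  obtain ⟨x₀, hx₀⟩ := eventually_atTop.mp ((tendsto_cdf_atTop μ).eventually_const_lt ht)
  exact ⟨x₀, (hx₀ x₀ le_rfl).le⟩

variable [IsProbabilityMeasure μ]

theorem quantileFn_eq_sInf_cdf (t : ℝ) : quantileFn μ t = sInf {x : ℝ | t ≤ cdf μ x} := by
  simp only [quantileFn, cdf_eq_real, measureReal_def]

theorem quantileFn_le_iff_le_cdf {t x : ℝ} (ht : t ∈ Ioo (0 : ℝ) 1) :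
    quantileFn μ t ≤ x ↔ t ≤ cdf μ x := by
  rw [quantileFn_eq_sInf_cdf]
  set S := {x : ℝ | t ≤ cdf μ x}
  have hbdd : BddBelow S := bddBelow_setOf_le_cdf μ ht.1
  refine ⟨fun h => ?_, fun h => csInf_le hbdd h⟩
  have h_right : ∀ y ∈ Ioi (sInf S), t ≤ cdf μ y := fun y hy => by
    obtain ⟨z, hzS, hzy⟩ := (csInf_lt_iff hbdd (nonempty_setOf_le_cdf μ ht.2)).mp hy
    exact hzS.trans (monotone_cdf μ hzy.le)
  -- the infimum belongs to `S` by right continuity of `F_μ`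
  have h_inf : t ≤ cdf μ (sInf S) :=
    ge_of_tendsto (((cdf μ).right_continuous (sInf S)).mono Ioi_subset_Ici_self).tendsto
      (eventually_mem_nhdsWithin.mono h_right)
  exact h_inf.trans (monotone_cdf μ h)

theorem monotoneOn_quantileFn : MonotoneOn (quantileFn μ) (Ioo (0 : ℝ) 1) := by
  intro t₁ ht₁ t₂ ht₂ h
  rw [quantileFn_eq_sInf_cdf, quantileFn_eq_sInf_cdf]
  exact csInf_le_csInf (bddBelow_setOf_le_cdf μ ht₁.1) (nonempty_setOf_le_cdf μ ht₂.2)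
    fun x hx => h.trans hx

theorem aemeasurable_quantileFn : AEMeasurable (quantileFn μ) (volume.restrict (Ioo (0 : ℝ) 1)) :=
  aemeasurable_restrict_of_monotoneOn measurableSet_Ioo (monotoneOn_quantileFn μ)

theorem map_quantileFn_restrict_Ioo :
    (volume.restrict (Ioo (0 : ℝ) 1)).map (quantileFn μ) = μ := by
  have hF := aemeasurable_quantileFn μ
  have : IsProbabilityMeasure (volume.restrict (Ioo (0 : ℝ) 1)) := ⟨by simp⟩
  have : IsProbabilityMeasure ((volume.restrict (Ioo (0 : ℝ) 1)).map (quantileFn μ)) :=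
    Measure.isProbabilityMeasure_map hF
  refine Measure.ext_of_Iic _ μ fun x => ?_
  have h_preimage : quantileFn μ ⁻¹' Iic x ∩ Ioo 0 1 = Iic (cdf μ x) ∩ Ioo 0 1 := by
    ext t
    simp only [mem_inter_iff, mem_preimage, mem_Iic]
    exact and_congr_left (quantileFn_le_iff_le_cdf μ)
  rw [Measure.map_apply_of_aemeasurable hF measurableSet_Iic,
    Measure.restrict_apply' measurableSet_Ioo, h_preimage,
    volume_Iic_inter_Ioo_zero_one (cdf_le_one μ x), ofReal_cdf]

theorem integrable_rpow_abs_quantileFn {q : ℝ}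
    (h : Integrable (fun x => |x| ^ q) μ) :
    Integrable (fun t => |quantileFn μ t| ^ q) (volume.restrict (Ioo (0 : ℝ) 1)) := by
  rwa [← integrable_rpow_abs_map_iff (aemeasurable_quantileFn μ), map_quantileFn_restrict_Ioo]

end Quantile

theorem abs_add_rpow_le (a b : ℝ) {q : ℝ} (hq : 0 ≤ q) :
    |a + b| ^ q ≤ 2 ^ q * (|a| ^ q + |b| ^ q) := by
  have h_max : |a + b| ≤ 2 * max |a| |b| := by
    linarith [abs_add_le a b, le_max_left |a| |b|, le_max_right |a| |b|]
  have h_max_rpow : max |a| |b| ^ q ≤ |a| ^ q + |b| ^ q := by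
    rcases le_total |a| |b| with h | h
    · rw [max_eq_right h]
      exact le_add_of_nonneg_left (by positivity)
    · rw [max_eq_left h]
      exact le_add_of_nonneg_right (by positivity)
  calc |a + b| ^ q ≤ (2 * max |a| |b|) ^ q := by gcongr
    _ = 2 ^ q * max |a| |b| ^ q := Real.mul_rpow zero_le_two (by positivity)
    _ ≤ 2 ^ q * (|a| ^ q + |b| ^ q) := by gcongr

theorem MeasureTheory.Integrable.rpow_abs_sub {α : Type*} [MeasurableSpace α] {μ : Measure α}
    {f g : α → ℝ} {q : ℝ} (hq : 0 ≤ q) (hf : AEMeasurable f μ) (hg : AEMeasurable g μ)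
    (hfq : Integrable (fun t => |f t| ^ q) μ) (hgq : Integrable (fun t => |g t| ^ q) μ) :
    Integrable (fun t => |f t - g t| ^ q) μ := by
  refine ((hfq.add hgq).const_mul (2 ^ q)).mono' (by fun_prop) (ae_of_all _ fun t => ?_)
  rw [Real.norm_of_nonneg (by positivity)]
  simpa only [← sub_eq_add_neg, abs_neg, Pi.add_apply] using abs_add_rpow_le (f t) (-g t) hq

theorem rpow_abs_le_of_sum_mul_rpow_abs_sub_le {ι : Type*} [Fintype ι] {w x : ι → ℝ} {y q : ℝ}
    (hq : 0 ≤ q) (hw : ∀ i, 0 ≤ w i) {i₀ : ι} (hi₀ : 0 < w i₀)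
    (h : ∑ i, w i * |x i - y| ^ q ≤ ∑ i, w i * |x i| ^ q) :
    |y| ^ q ≤ 2 ^ q * ((∑ i, w i * |x i| ^ q) / w i₀ + |x i₀| ^ q) := by
  have h_term : w i₀ * |x i₀ - y| ^ q ≤ ∑ i, w i * |x i| ^ q :=
    (Finset.single_le_sum (f := fun i => w i * |x i - y| ^ q)
      (fun i _ => mul_nonneg (hw i) (by positivity)) (Finset.mem_univ i₀)).trans h
  calc |y| ^ q = |(y - x i₀) + x i₀| ^ q := by rw [sub_add_cancel]
    _ ≤ 2 ^ q * (|y - x i₀| ^ q + |x i₀| ^ q) := abs_add_rpow_le _ _ hq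
    _ ≤ 2 ^ q * ((∑ i, w i * |x i| ^ q) / w i₀ + |x i₀| ^ q) := by
      gcongr
      rwa [abs_sub_comm, le_div_iff₀' hi₀]

theorem integrable_rpow_abs_of_ae_sum_mul_rpow_abs_sub_le {α ι : Type*} [MeasurableSpace α]
    {μ : Measure α} [Fintype ι] {w : ι → ℝ} {F : ι → α → ℝ} {Q : α → ℝ} {q : ℝ}
    (hq : 0 ≤ q) (hw : ∀ i, 0 ≤ w i) {i₀ : ι} (hi₀ : 0 < w i₀) (hQ : AEMeasurable Q μ)
    (hF : ∀ i, Integrable (fun t => |F i t| ^ q) μ)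
    (h : ∀ᵐ t ∂μ, ∑ i, w i * |F i t - Q t| ^ q ≤ ∑ i, w i * |F i t| ^ q) :
    Integrable (fun t => |Q t| ^ q) μ := by
  have h_sum : Integrable (fun t => ∑ i, w i * |F i t| ^ q) μ :=
    integrable_finsetSum _ fun i _ => (hF i).const_mul (w i)
  refine (((h_sum.div_const (w i₀)).add (hF i₀)).const_mul (2 ^ q)).mono' (by fun_prop) ?_
  filter_upwards [h] with t ht
  rw [Real.norm_of_nonneg (by positivity)]
  exact rpow_abs_le_of_sum_mul_rpow_abs_sub_le hq hw hi₀ ht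

theorem sum_mul_integral_le_of_ae_sum_mul_le {α ι : Type*} [MeasurableSpace α] {μ : Measure α}
    (s : Finset ι) (w : ι → ℝ) {f g : ι → α → ℝ} (hf : ∀ i ∈ s, Integrable (f i) μ)
    (hg : ∀ i ∈ s, Integrable (g i) μ)
    (h : ∀ᵐ t ∂μ, ∑ i ∈ s, w i * f i t ≤ ∑ i ∈ s, w i * g i t) :
    ∑ i ∈ s, w i * ∫ t, f i t ∂μ ≤ ∑ i ∈ s, w i * ∫ t, g i t ∂μ := by
  simp_rw [← integral_const_mul]
  rw [← integral_finsetSum _ fun i hi => (hf i hi).const_mul (w i),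
    ← integral_finsetSum _ fun i hi => (hg i hi).const_mul (w i)]
  exact integral_mono_ae (integrable_finsetSum _ fun i hi => (hf i hi).const_mul (w i))
    (integrable_finsetSum _ fun i hi => (hg i hi).const_mul (w i)) h

theorem wasserstein_q_barycenter_quantile_general
    (K : ℕ) (q : ℝ) (hq : 1 ≤ q)
    (μ : Fin K → Measure ℝ) (hprob : ∀ s, IsProbabilityMeasure (μ s))
    (hmom : ∀ s, Integrable (fun x => |x| ^ q) (μ s))
    (w : Fin K → ℝ) (hw_nonneg : ∀ s, 0 ≤ w s) (hw_sum : ∑ s, w s = 1)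
    (Q : ℝ → ℝ) (hQ_meas : Measurable Q)
    (hQ_min : ∀ t ∈ Set.Ioo (0 : ℝ) 1, ∀ y : ℝ,
      ∑ s, w s * |quantileFn (μ s) t - Q t| ^ q ≤
        ∑ s, w s * |quantileFn (μ s) t - y| ^ q) :
    Integrable (fun x => |x| ^ q)
      (Measure.map Q (volume.restrict (Set.Ioo (0 : ℝ) 1))) ∧
    ∀ ν : Measure ℝ, IsProbabilityMeasure ν →
      Integrable (fun x => |x| ^ q) ν →
      ∑ s, w s * ∫ t in Set.Ioo (0 : ℝ) 1, |quantileFn (μ s) t - Q t| ^ q ≤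
        ∑ s, w s * ∫ t in Set.Ioo (0 : ℝ) 1,
          |quantileFn (μ s) t - quantileFn ν t| ^ q := by
  have hq₀ : 0 ≤ q := by linarith
  obtain ⟨s₀, -, hs₀⟩ : ∃ s ∈ Finset.univ, (0 : ℝ) < w s :=
    Finset.exists_lt_of_sum_lt (by simp [hw_sum])
  have hF : ∀ s, Integrable (fun t => |quantileFn (μ s) t| ^ q) (volume.restrict (Ioo 0 1)) :=
    fun s => integrable_rpow_abs_quantileFn (μ s) (hmom s)
  have hQ : Integrable (fun t => |Q t| ^ q) (volume.restrict (Ioo (0 : ℝ) 1)) :=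
    integrable_rpow_abs_of_ae_sum_mul_rpow_abs_sub_le hq₀ hw_nonneg hs₀ hQ_meas.aemeasurable hF
      (ae_restrict_of_forall_mem measurableSet_Ioo fun t ht => by
        simpa only [sub_zero] using hQ_min t ht 0)
  refine ⟨(integrable_rpow_abs_map_iff hQ_meas.aemeasurable).2 hQ, fun ν _ hν => ?_⟩
  exact sum_mul_integral_le_of_ae_sum_mul_le _ _
    (fun s _ => (hF s).rpow_abs_sub hq₀ (aemeasurable_quantileFn _) hQ_meas.aemeasurable hQ)
    (fun s _ => (hF s).rpow_abs_sub hq₀ (aemeasurable_quantileFn _) (aemeasurable_quantileFn ν)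
      (integrable_rpow_abs_quantileFn ν hν))
    (ae_restrict_of_forall_mem measurableSet_Ioo fun t ht => hQ_min t ht _)

/-- One-dimensional Wasserstein-`q` barycenter: if the quantile function of `ν*` is a
(monotone, measurable) pointwise minimizer `Q(t)` of `y ↦ ∑ w_s |F⁻¹_{μ_s}(t) - y|^q`,
then `ν* = Q # Unif(0,1)` has finite `q`-th moment and minimizes
`ν ↦ ∑ w_s W_q^q(μ_s, ν) = ∑ w_s ∫₀¹ |F⁻¹_{μ_s} - F⁻¹_ν|^q` over `P_q(ℝ)`. -/
theorem wasserstein_q_barycenter_quantile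
    (K : ℕ) (q : ℝ) (hq : 1 ≤ q)
    (μ : Fin K → Measure ℝ) (hprob : ∀ s, IsProbabilityMeasure (μ s))
    (hatomless : ∀ s (x : ℝ), μ s {x} = 0)
    (hmom : ∀ s, Integrable (fun x => |x| ^ q) (μ s))
    (w : Fin K → ℝ) (hw_nonneg : ∀ s, 0 ≤ w s) (hw_sum : ∑ s, w s = 1)
    (Q : ℝ → ℝ) (hQ_meas : Measurable Q) (hQ_mono : MonotoneOn Q (Set.Ioo 0 1))
    (hQ_min : ∀ t ∈ Set.Ioo (0 : ℝ) 1, ∀ y : ℝ,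
      ∑ s, w s * |quantileFn (μ s) t - Q t| ^ q ≤
        ∑ s, w s * |quantileFn (μ s) t - y| ^ q) :
    Integrable (fun x => |x| ^ q)
      (Measure.map Q (volume.restrict (Set.Ioo (0 : ℝ) 1))) ∧
    ∀ ν : Measure ℝ, IsProbabilityMeasure ν →
      Integrable (fun x => |x| ^ q) ν →
      ∑ s, w s * ∫ t in Set.Ioo (0 : ℝ) 1, |quantileFn (μ s) t - Q t| ^ q ≤
        ∑ s, w s * ∫ t in Set.Ioo (0 : ℝ) 1,
          |quantileFn (μ s) t - quantileFn ν t| ^ q :=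
  wasserstein_q_barycenter_quantile_general K q hq μ hprob hmom w hw_nonneg hw_sum Q hQ_meas hQ_min
end
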